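/- arXiv:2212.02345 — 13 statements merged into one kernel-verified Lean document; each statement's English description precedes it below -/
import Mathlib

section
/- If (σ, τ) is an apparent pair of an elementwise filtration of a based chain complex, then the column of τ in the filtration boundary matrix is reduced, and (σ, τ) is a persistence pair of the filtration. -/
open Classical Finset

noncomputable section

variable {𝕜 : Type} [Field 𝕜] {l : ℕ}

/-- The support of a coordinate vector: the set of basis indices with nonzero coefficient. -/
def vsupp (c : Fin l → 𝕜) : Finset (Fin l) :=
  Finset.univ.filter (fun i => c i ≠ 0)

/-- The pivot of a coordinate vector: the maximal index of its support (`⊥` if zero). -/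
def vpivot (c : Fin l → 𝕜) : WithBot (Fin l) := (vsupp c).max

lemma coe_le_vpivot {c : Fin l → 𝕜} {i : Fin l} (h : c i ≠ 0) :
    (i : WithBot (Fin l)) ≤ vpivot c :=
  Finset.le_max (by simp [vsupp, h])

lemma vpivot_le_coe {c : Fin l → 𝕜} {i : Fin l} (h : ∀ k, c k ≠ 0 → k ≤ i) :
    vpivot c ≤ (i : WithBot (Fin l)) :=
  Finset.max_le (by
    intro b hb
    simp only [vsupp, Finset.mem_filter] at hb
    exact_mod_cast h b hb.2)

/-- The lexicographic order on finite subsets of a totally ordered set. -/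
def finsetLexLe {α : Type*} [LinearOrder α] (A B : Finset α) : Prop :=
  A = B ∨ ∃ h : ((A \ B) ∪ (B \ A)).Nonempty, ((A \ B) ∪ (B \ A)).max' h ∈ B

/-- The lexicographic preorder on chains, comparing supports lexicographically. -/
def chainLexLe (c₁ c₂ : Fin l → 𝕜) : Prop := finsetLexLe (vsupp c₁) (vsupp c₂)

/-- The strict lexicographic preorder on chains. -/
def chainLexLt (c₁ c₂ : Fin l → 𝕜) : Prop :=
  chainLexLe c₁ c₂ ∧ vsupp c₁ ≠ vsupp c₂

/-- A basis element is critical if it is contained in no pair of `V`. -/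
def CriticalIn {l : ℕ} (V : Finset (Fin l × Fin l)) (a : Fin l) : Prop :=
  ∀ p ∈ V, p.1 ≠ a ∧ p.2 ≠ a

/-- A based chain complex with an elementwise filtration: the basis elements are
`σ_1 < … < σ_l` (indexed by `Fin l`), `deg` records their homological degree, and `D` is the
filtration boundary matrix (the column `D _ j` represents `∂σ_j`).  Monotonicity `filt`
expresses that the down sets of the filtration order span subcomplexes, `homog` that the
boundary map decreases degree by one, and `dd` that `∂ ∘ ∂ = 0`. -/
structure BasedChainComplex (𝕜 : Type) [Field 𝕜] (l : ℕ) where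
  deg : Fin l → ℕ
  D : Matrix (Fin l) (Fin l) 𝕜
  homog : ∀ i j, D i j ≠ 0 → deg i + 1 = deg j
  filt : ∀ i j, D i j ≠ 0 → i < j
  dd : D * D = 0

namespace BasedChainComplex

variable (C : BasedChainComplex 𝕜 l)

/-- `σ_i` is a facet of `σ_j` if `⟨∂σ_j, σ_i⟩ ≠ 0`. -/
def IsFacet (i j : Fin l) : Prop := C.D i j ≠ 0

/-- An algebraic gradient: a disjoint collection `V` of facet pairs arising from an
algebraic Morse function, i.e. a monotonic function `f` on the basis such that a facet
pair `(μ, η)` satisfies `f μ = f η` iff `(μ, η) ∈ V`. -/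
def IsAlgGradient (V : Finset (Fin l × Fin l)) : Prop :=
  (∀ p ∈ V, C.IsFacet p.1 p.2) ∧
  (∀ p ∈ V, ∀ q ∈ V, p ≠ q → p.1 ≠ q.1 ∧ p.1 ≠ q.2 ∧ p.2 ≠ q.1 ∧ p.2 ≠ q.2) ∧
  (∃ f : Fin l → ℝ, (∀ i j, C.IsFacet i j → f i ≤ f j) ∧
    (∀ i j, C.IsFacet i j → (f i = f j ↔ (i, j) ∈ V)))

/-- The chain homotopy `F` of an algebraic gradient `V`: the linear map with
`F σ = −⟨∂τ, σ⟩⁻¹ · τ` if `(σ, τ) ∈ V` and `F σ = 0` otherwise. -/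
def Fmap (V : Finset (Fin l × Fin l)) (c : Fin l → 𝕜) : Fin l → 𝕜 :=
  fun j => ∑ i, (if (i, j) ∈ V then -(C.D i j)⁻¹ else 0) * c i

/-- The flow of an algebraic gradient `V`: `Φ(c) = c + ∂F(c) + F(∂c)`. -/
def flow (V : Finset (Fin l × Fin l)) (c : Fin l → 𝕜) : Fin l → 𝕜 :=
  c + C.D.mulVec (C.Fmap V c) + C.Fmap V (C.D.mulVec c)

/-- A cycle of degree `n`: a chain with `∂z = 0` supported in degree `n`. -/
def IsCycle (n : ℕ) (z : Fin l → 𝕜) : Prop :=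
  C.D.mulVec z = 0 ∧ ∀ i, z i ≠ 0 → C.deg i = n

/-- `V` is `n`-reduced: for every pair `(a, b) ∈ V` with `a` of degree `n`,
the pivot of `∂b` equals `a`. -/
def NReduced (V : Finset (Fin l × Fin l)) (n : ℕ) : Prop :=
  ∀ p ∈ V, C.deg p.1 = n → vpivot (fun i => C.D i p.2) = (p.1 : WithBot (Fin l))

/-- `V` generates the `n`-boundaries: the gradient cofacet boundaries
`{∂b : (a,b) ∈ V, deg a = n}` span the space of boundaries of degree `n`. -/
def GeneratesBoundaries (V : Finset (Fin l × Fin l)) (n : ℕ) : Prop :=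
  ∀ e : Fin l → 𝕜, (∀ i, e i ≠ 0 → C.deg i = n + 1) →
    C.D.mulVec e ∈ Submodule.span 𝕜
      {x : Fin l → 𝕜 | ∃ p ∈ V, C.deg p.1 = n ∧ x = fun i => C.D i p.2}

/-- A chain is lexicographically minimal if no homologous chain is strictly smaller
in the lexicographic preorder. -/
def LexMinimal (z : Fin l → 𝕜) : Prop :=
  ∀ e : Fin l → 𝕜, ¬ chainLexLt (z + C.D.mulVec e) z

end BasedChainComplex

end

section Statement

variable {𝕜 : Type} [Field 𝕜] {l : ℕ}

open Classical in
/-- A column `R_j` is reduced if its pivot cannot be decreased by adding a linear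
combination of the columns `R_i` with `i < j`. -/
def ColReduced (R : Matrix (Fin l) (Fin l) 𝕜) (j : Fin l) : Prop :=
  ∀ μ : Fin l → 𝕜, (∀ i, ¬ i < j → μ i = 0) →
    vpivot (fun i => R i j) ≤ vpivot (fun i => R i j + ∑ k, μ k * R i k)

/-- A matrix is reduced if all of its columns are reduced. -/
def MatReduced (R : Matrix (Fin l) (Fin l) 𝕜) : Prop := ∀ j, ColReduced R j

namespace BasedChainComplex

variable (C : BasedChainComplex 𝕜 l)

/-- `(σ_i, σ_j)` is an apparent pair if `σ_i` is the maximal facet of `σ_j` and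
`σ_j` is the minimal cofacet of `σ_i`. -/
def ApparentPair (i j : Fin l) : Prop :=
  C.D i j ≠ 0 ∧ (∀ k, C.D k j ≠ 0 → k ≤ i) ∧ (∀ k, C.D i k ≠ 0 → j ≤ k)

/-- `(σ_i, σ_j)` is a persistence pair: for every reduction `R = D·S` of the filtration
boundary matrix by a homogeneous full-rank upper-triangular matrix `S`, the pivot of the
column `R_j` is `i`. -/
def PersistencePair (i j : Fin l) : Prop :=
  ∀ S : Matrix (Fin l) (Fin l) 𝕜, (∀ a b, b < a → S a b = 0) → S.det ≠ 0 →
    (∀ a b, S a b ≠ 0 → C.deg a = C.deg b) →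
    MatReduced (C.D * S) →
    vpivot (fun a => (C.D * S) a j) = (i : WithBot (Fin l))

end BasedChainComplex

/-- If `(σ, τ)` is an apparent pair of an elementwise filtration of a based chain complex,
then the column of `τ` in the filtration boundary matrix is reduced,
and `(σ, τ)` is a persistence pair of the filtration. -/
theorem stmt1 (C : BasedChainComplex 𝕜 l) (i j : Fin l) (h : C.ApparentPair i j) :
    ColReduced C.D j ∧ C.PersistencePair i j := by
  obtain ⟨hij, hmax, hmin⟩ := h
  have hDik : ∀ k, k < j → C.D i k = 0 := by
    intro k hk
    by_contra hne
    exact absurd (hmin k hne) (not_le.mpr hk)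
  have hpivj : vpivot (fun a => C.D a j) = (i : WithBot (Fin l)) :=
    le_antisymm (vpivot_le_coe hmax) (coe_le_vpivot hij)
  have hcolred : ColReduced C.D j := by
    intro μ hμ
    rw [hpivj]
    apply coe_le_vpivot
    have hsum : ∑ k, μ k * C.D i k = 0 := by
      apply Finset.sum_eq_zero
      intro k _
      by_cases hk : k < j
      · rw [hDik k hk, mul_zero]
      · rw [hμ k hk, zero_mul]
    simpa [hsum] using hij
  refine ⟨hcolred, ?_⟩
  intro S hS hdet hhom hred
  haveI : Invertible S := S.invertibleOfIsUnitDet (isUnit_iff_ne_zero.mpr hdet)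
  have hStri : S.BlockTriangular id := fun a b hab => hS a b hab
  have hSinv : ∀ a b : Fin l, b < a → S⁻¹ a b = 0 :=
    fun a b hab => Matrix.blockTriangular_inv_of_blockTriangular hStri hab
  have hSjj : S j j ≠ 0 := by
    have := hdet
    rw [Matrix.det_of_upperTriangular hStri] at this
    exact fun h0 => this (Finset.prod_eq_zero (Finset.mem_univ j) h0)
  -- the entry (i, j) of D*S is D i j * S j j ≠ 0
  have hRij : (C.D * S) i j = C.D i j * S j j := by
    rw [Matrix.mul_apply]
    apply Finset.sum_eq_single
    · intro k _ hk
      rcases lt_or_gt_of_ne hk with hlt | hgt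
      · rw [hDik k hlt, zero_mul]
      · rw [hS k j hgt, mul_zero]
    · intro hj; exact absurd (Finset.mem_univ j) hj
  have hlow : (i : WithBot (Fin l)) ≤ vpivot (fun a => (C.D * S) a j) := by
    apply coe_le_vpivot
    rw [hRij]
    exact mul_ne_zero hij hSjj
  -- upper bound via reducedness of column j
  set v : Fin l → 𝕜 := fun k => if k < j then S k j else 0 with hv
  set μ : Fin l → 𝕜 := fun k => -(S⁻¹.mulVec v) k with hμdef
  have hμeq : μ = -(S⁻¹.mulVec v) := by ext k; simp [hμdef]
  have hμsupp : ∀ k, ¬ k < j → μ k = 0 := by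
    intro k hk
    rw [hμeq]
    show -(S⁻¹.mulVec v) k = 0
    have : S⁻¹.mulVec v k = ∑ m, S⁻¹ k m * v m := rfl
    rw [this, neg_eq_zero]
    apply Finset.sum_eq_zero
    intro m _
    by_cases hm : m < j
    · rw [hSinv k m (lt_of_lt_of_le hm (not_lt.mp hk)), zero_mul]
    · show S⁻¹ k m * (if m < j then S m j else 0) = 0
      simp [hm]
  have hSmu : S.mulVec μ = -v := by
    rw [hμeq, Matrix.mulVec_neg, Matrix.mulVec_mulVec,
      Matrix.mul_nonsing_inv S (isUnit_iff_ne_zero.mpr hdet), Matrix.one_mulVec]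
  have hkey : ∀ a, (C.D * S) a j + ∑ k, μ k * (C.D * S) a k = C.D a j * S j j := by
    intro a
    have h1 : ∑ k, μ k * (C.D * S) a k = ∑ m, C.D a m * (S.mulVec μ) m := by
      simp only [Matrix.mul_apply, Matrix.mulVec, dotProduct, Finset.mul_sum,
        Finset.sum_mul]
      rw [Finset.sum_comm]
      refine Finset.sum_congr rfl fun m _ => Finset.sum_congr rfl fun k _ => by ring
    rw [h1, hSmu]
    have h2 : (C.D * S) a j = ∑ m, C.D a m * S m j := Matrix.mul_apply
    rw [h2]
    have h3 : ∀ m : Fin l, C.D a m * S m j + C.D a m * (-v) m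
        = if m = j then C.D a j * S j j else 0 := by
      intro m
      by_cases hmj : m = j
      · subst hmj
        simp [hv, lt_irrefl]
      · rcases lt_or_gt_of_ne hmj with hlt | hgt
        · simp [hv, hlt, hmj]
        · simp [hv, not_lt.mpr (le_of_lt hgt), hS m j hgt, hmj]
    calc (∑ m, C.D a m * S m j) + ∑ m, C.D a m * (-v) m
        = ∑ m, (C.D a m * S m j + C.D a m * (-v) m) := (Finset.sum_add_distrib).symm
      _ = ∑ m, if m = j then C.D a j * S j j else 0 :=
          Finset.sum_congr rfl fun m _ => h3 m
      _ = C.D a j * S j j := by simp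
  have hup : vpivot (fun a => (C.D * S) a j) ≤ (i : WithBot (Fin l)) := by
    have := hred j μ hμsupp
    refine le_trans this ?_
    apply vpivot_le_coe
    intro k hk
    rw [hkey k] at hk
    exact hmax k (fun h0 => hk (by rw [h0, zero_mul]))
  exact le_antisymm hup hlow

end Statement
end

section
/- The collection of apparent pairs of an elementwise filtration of a based chain complex forms an algebraic gradient, i.e., the apparent pairs are pairwise disjoint and there exists a monotonic function f on the basis such that a facet pair (μ, η) satisfies f(μ) = f(η) if and only if (μ, η) is an apparent pair. -/
open Classical Finset

section Statement

open Classical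

variable {𝕜 : Type} [Field 𝕜] {l : ℕ}

namespace BasedChainComplex

variable (C : BasedChainComplex 𝕜 l)

/-- The collection of all apparent pairs of the elementwise filtration. -/
noncomputable def apparentPairs : Finset (Fin l × Fin l) :=
  Finset.univ.filter (fun p => C.ApparentPair p.1 p.2)

end BasedChainComplex


namespace BasedChainComplex

lemma apparent_no_chain (C : BasedChainComplex 𝕜 l) {a b c : Fin l}
    (hab : C.ApparentPair a b) (hbc : C.ApparentPair b c) : False := by
  have h0 : (C.D * C.D) a c = 0 := by rw [C.dd]; rfl
  rw [Matrix.mul_apply] at h0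
  have hs : ∑ k, C.D a k * C.D k c = C.D a b * C.D b c := by
    apply Finset.sum_eq_single
    · intro k _ hk
      by_contra h
      have h1 : C.D a k ≠ 0 := fun h' => h (by simp [h'])
      have h2 : C.D k c ≠ 0 := fun h' => h (by simp [h'])
      exact hk (le_antisymm (hbc.2.1 k h2) (hab.2.2 k h1))
    · intro h; exact absurd (Finset.mem_univ b) h
  rw [hs] at h0
  exact mul_ne_zero hab.1 hbc.1 h0

lemma apparent_unique_facet (C : BasedChainComplex 𝕜 l) {a a' b : Fin l}
    (h : C.ApparentPair a b) (h' : C.ApparentPair a' b) : a = a' :=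
  le_antisymm (h'.2.1 a h.1) (h.2.1 a' h'.1)

lemma apparent_unique_cofacet (C : BasedChainComplex 𝕜 l) {a b b' : Fin l}
    (h : C.ApparentPair a b) (h' : C.ApparentPair a b') : b = b' :=
  le_antisymm (h.2.2 b' h'.1) (h'.2.2 b h.1)

end BasedChainComplex

/-- The collection of apparent pairs of an elementwise filtration of a based chain complex
forms an algebraic gradient: the apparent pairs are pairwise disjoint facet pairs and there
is a monotonic function `f` on the basis such that a facet pair `(μ, η)` satisfies
`f μ = f η` if and only if `(μ, η)` is an apparent pair. -/

theorem stmt2 (C : BasedChainComplex 𝕜 l) :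
    C.IsAlgGradient C.apparentPairs := by
  refine ⟨?_, ?_, ?_⟩
  · intro p hp
    simp only [BasedChainComplex.apparentPairs, Finset.mem_filter] at hp
    exact hp.2.1
  · intro p hp q hq hne
    simp only [BasedChainComplex.apparentPairs, Finset.mem_filter] at hp hq
    have hp := hp.2; have hq := hq.2
    refine ⟨?_, ?_, ?_, ?_⟩
    · intro h
      apply hne
      have : p.2 = q.2 := C.apparent_unique_cofacet (h ▸ hp) hq
      exact Prod.ext h this
    · intro h
      exact C.apparent_no_chain hq (h ▸ hp)
    · intro h
      exact C.apparent_no_chain hp (h ▸ hq)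
    · intro h
      apply hne
      have : p.1 = q.1 := C.apparent_unique_facet (h ▸ hp) hq
      exact Prod.ext this h
  · classical
    set f : Fin l → ℝ := fun j =>
      if h : ∃ i, C.ApparentPair i j then ((h.choose : Fin l) : ℕ) else (j : ℕ) with hf
    have key : ∀ i j, C.IsFacet i j → (f i ≤ f j ∧ (f i = f j ↔ C.ApparentPair i j)) := by
      intro i j hij
      have hij' : C.D i j ≠ 0 := hij
      have hlt : i < j := C.filt i j hij'
      have fi_le : f i ≤ (i : ℕ) := by
        rw [hf]
        by_cases h : ∃ i', C.ApparentPair i' i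
        · simp only [dif_pos h]
          have := C.filt _ _ h.choose_spec.1
          exact_mod_cast this.le
        · simp [dif_neg h]
      by_cases hj : ∃ i', C.ApparentPair i' j
      · have hjj : f j = ((hj.choose : Fin l) : ℕ) := by rw [hf]; simp [dif_pos hj]
        have hile : i ≤ hj.choose := hj.choose_spec.2.1 i hij'
        constructor
        · calc f i ≤ (i : ℕ) := fi_le
            _ ≤ _ := by exact_mod_cast hile
            _ = f j := hjj.symm
        · constructor
          · intro hfeq
            -- f i = f j = choose. Show f i = i, hence i = choose, hence apparent.
            by_cases hi : ∃ i', C.ApparentPair i' i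
            · exfalso
              have hii : f i = ((hi.choose : Fin l) : ℕ) := by rw [hf]; simp [dif_pos hi]
              have : (hi.choose : ℕ) = (hj.choose : ℕ) := by
                have := hfeq; rw [hii, hjj] at this; exact_mod_cast this
              have heq : hi.choose = hj.choose := Fin.val_injective this
              -- ApparentPair a i and ApparentPair a j with i < j; j min cofacet of a gives j ≤ i
              have h1 := hi.choose_spec
              have h2 := hj.choose_spec
              rw [heq] at h1
              have : j ≤ i := h2.2.2 i h1.1
              exact absurd this (not_le.mpr hlt)
            · have hii : f i = (i : ℕ) := by rw [hf]; simp [dif_neg hi]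
              have : (i : ℕ) = ((hj.choose : Fin l) : ℕ) := by
                have := hfeq; rw [hii, hjj] at this; exact_mod_cast this
              have : i = hj.choose := Fin.val_injective this
              rw [this]; exact hj.choose_spec
          · intro hap
            have : i = hj.choose := C.apparent_unique_facet hap hj.choose_spec
            have hi : ¬ ∃ i', C.ApparentPair i' i := by
              rintro ⟨i', hi'⟩
              exact C.apparent_no_chain hi' hap
            have hii : f i = (i : ℕ) := by rw [hf]; simp [dif_neg hi]
            rw [hii, hjj, this]
      · have hjj : f j = (j : ℕ) := by rw [hf]; simp [dif_neg hj]
        have hlt' : f i < f j := by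
          calc f i ≤ (i : ℕ) := fi_le
            _ < (j : ℕ) := by exact_mod_cast hlt
            _ = f j := hjj.symm
        refine ⟨hlt'.le, ?_⟩
        constructor
        · intro h; exact absurd h hlt'.ne
        · intro hap
          exact absurd ⟨i, hap⟩ hj
    refine ⟨f, fun i j h => (key i j h).1, fun i j h => ?_⟩
    rw [(key i j h).2]
    simp [BasedChainComplex.apparentPairs]


end Statement
end

section
/- Let V be a discrete gradient on a finite simplicial complex K, let C be a subset of the V-critical simplices, and let W be a refinement of V. Then the descending complex D(C, W) is a subcomplex of the descending complex D(C, V). -/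
open Classical Finset

noncomputable section

variable {α : Type} [DecidableEq α]

/-- A finite simplicial complex: a finite collection of finite nonempty sets closed under
passing to nonempty subsets. -/
structure SimpComplex (α : Type) [DecidableEq α] where
  K : Finset (Finset α)
  nonempty_mem : ∀ σ ∈ K, σ.Nonempty
  down_closed : ∀ σ ∈ K, ∀ ρ : Finset α, ρ.Nonempty → ρ ⊆ σ → ρ ∈ K

/-- A (generalized) discrete gradient on a finite simplicial complex `C`, given by its
gradient partition `P` of `C.K` into face-poset intervals `[ρ, φ]` (encoded as pairs
`(ρ, φ)`), arising from a generalized discrete Morse function `f`: `f` is monotonic, and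
two comparable simplices have the same value iff they lie in a common interval of `P`.
The simplices in singleton intervals `(σ, σ)` are the critical ones. -/
structure DiscreteGradient (C : SimpComplex α) where
  P : Finset (Finset α × Finset α)
  sub : ∀ I ∈ P, I.1 ⊆ I.2
  interval_mem : ∀ I ∈ P, ∀ ψ : Finset α, I.1 ⊆ ψ → ψ ⊆ I.2 → ψ ∈ C.K
  partition : ∀ σ ∈ C.K, ∃! I, I ∈ P ∧ I.1 ⊆ σ ∧ σ ⊆ I.2
  morse : ∃ f : Finset α → ℝ,
    (∀ σ ∈ C.K, ∀ τ ∈ C.K, σ ⊆ τ → f σ ≤ f τ) ∧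
    (∀ σ ∈ C.K, ∀ τ ∈ C.K, σ ⊆ τ →
      (f σ = f τ ↔ ∃ I ∈ P, I.1 ⊆ σ ∧ τ ⊆ I.2))

namespace DiscreteGradient

variable {C : SimpComplex α} (G : DiscreteGradient C)

/-- A simplex is critical if its interval in the gradient partition is a singleton. -/
def IsCrit (σ : Finset α) : Prop := (σ, σ) ∈ G.P

/-- One step of the canonical relation on the gradient partition: `I ~ J` iff some simplex
of the interval `I` is a face of some simplex of the interval `J`. -/
def stepRel (I J : Finset α × Finset α) : Prop :=
  I ∈ G.P ∧ J ∈ G.P ∧ ∃ σ τ : Finset α,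
    I.1 ⊆ σ ∧ σ ⊆ I.2 ∧ J.1 ⊆ τ ∧ τ ⊆ J.2 ∧ σ ⊆ τ

/-- The canonical poset structure on the gradient partition: the reflexive-transitive
closure of `stepRel`. -/
def le (I J : Finset α × Finset α) : Prop := Relation.ReflTransGen G.stepRel I J

/-- The descending complex `D(Cs, G)` of a set `Cs` of critical simplices: the union of
the intervals in the down set of the singleton intervals `{σ}`, `σ ∈ Cs`. -/
def descCpx (Cs : Finset (Finset α)) : Finset (Finset α) :=
  C.K.filter fun ψ => ∃ I ∈ G.P, I.1 ⊆ ψ ∧ ψ ⊆ I.2 ∧ ∃ σ ∈ Cs, G.le I (σ, σ)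

end DiscreteGradient

/-- `W` refines `V`: every interval of the gradient partition of `W` is contained in an
interval of the gradient partition of `V` (equivalently, each interval of `V` is a
disjoint union of intervals of `W`). -/
def Refines {C : SimpComplex α} (W V : DiscreteGradient C) : Prop :=
  ∀ J ∈ W.P, ∃ I ∈ V.P, I.1 ⊆ J.1 ∧ J.2 ⊆ I.2

end

/-- Let `V` be a discrete gradient on a finite simplicial complex `K`, let `Cs` be a
subset of the `V`-critical simplices, and let `W` be a refinement of `V`.  Then the
descending complex `D(Cs, W)` is a subcomplex of the descending complex `D(Cs, V)`. -/
theorem stmt3 {α : Type} [DecidableEq α] {C : SimpComplex α}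
    (V W : DiscreteGradient C) (hWV : Refines W V)
    (Cs : Finset (Finset α)) (hCs : ∀ σ ∈ Cs, V.IsCrit σ) :
    W.descCpx Cs ⊆ V.descCpx Cs := by
  -- key lemma: if W.le J₁ J₂ and Iᵢ are V-intervals containing Jᵢ, then V.le I₁ I₂
  have key : ∀ J₁ J₂, Relation.ReflTransGen W.stepRel J₁ J₂ → J₁ ∈ W.P →
      ∀ I₁ ∈ V.P, I₁.1 ⊆ J₁.1 → J₁.2 ⊆ I₁.2 →
      ∀ I₂ ∈ V.P, I₂.1 ⊆ J₂.1 → J₂.2 ⊆ I₂.2 → V.le I₁ I₂ := by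
    intro J₁ J₂ h
    induction h with
    | refl =>
      intro hJ₁ I₁ hI₁P hI₁a hI₁b I₂ hI₂P hI₂a hI₂b
      have hmem : J₁.1 ∈ C.K := W.interval_mem J₁ hJ₁ J₁.1 (subset_refl _) (W.sub J₁ hJ₁)
      obtain ⟨I, _, hIu⟩ := V.partition J₁.1 hmem
      have e1 : I₁ = I := hIu I₁ ⟨hI₁P, hI₁a, (W.sub J₁ hJ₁).trans hI₁b⟩
      have e2 : I₂ = I := hIu I₂ ⟨hI₂P, hI₂a, (W.sub J₁ hJ₁).trans hI₂b⟩
      rw [e1, e2]; exact Relation.ReflTransGen.refl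
    | tail hab hbc ih =>
      rename_i b c
      intro hJ₁ I₁ hI₁P hI₁a hI₁b I₂ hI₂P hI₂a hI₂b
      obtain ⟨hbP, hcP, σ, τ, hσ1, hσ2, hτ1, hτ2, hστ⟩ := hbc
      obtain ⟨Ib, hIbP, hIba, hIbb⟩ := hWV b hbP
      have h1 : V.le I₁ Ib := ih hJ₁ I₁ hI₁P hI₁a hI₁b Ib hIbP hIba hIbb
      refine h1.tail ?_
      exact ⟨hIbP, hI₂P, σ, τ, hIba.trans hσ1, hσ2.trans hIbb, hI₂a.trans hτ1,
        hτ2.trans hI₂b, hστ⟩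
  intro ψ hψ
  simp only [DiscreteGradient.descCpx, mem_filter] at hψ ⊢
  obtain ⟨hψK, J, hJP, hJa, hJb, σ, hσCs, hle⟩ := hψ
  obtain ⟨I, hIP, hIa, hIb⟩ := hWV J hJP
  refine ⟨hψK, I, hIP, hIa.trans hJa, hJb.trans hIb, σ, hσCs, ?_⟩
  exact key J (σ, σ) hle hJP I hIP hIa hIb (σ, σ) (hCs σ hσCs)
    (subset_refl _) (subset_refl _)
end

section
/- Let V be a discrete gradient on a finite simplicial complex K. Then the descending complex D(V) of V is the smallest subcomplex L of K such that K \ L is a disjoint union of regular intervals of V; that is, K \ D(V) is a disjoint union of regular intervals of V, and any subcomplex L of K with K \ L a disjoint union of regular intervals of V contains D(V). -/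
open Classical Finset

/-- `L` is a subcomplex of `C.K` whose complement is a disjoint union of regular
intervals of the gradient `V`. -/
def CollapsibleCompl {α : Type} [DecidableEq α] {C : SimpComplex α}
    (V : DiscreteGradient C) (L : Finset (Finset α)) : Prop :=
  L ⊆ C.K ∧ (∀ σ ∈ L, ∀ ρ : Finset α, ρ.Nonempty → ρ ⊆ σ → ρ ∈ L) ∧
  ∃ S ⊆ V.P, (∀ I ∈ S, I.1 ≠ I.2) ∧
    ∀ ψ ∈ C.K, (ψ ∉ L ↔ ∃ I ∈ S, I.1 ⊆ ψ ∧ ψ ⊆ I.2)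

open Classical in
/-- If the complement of `L` is a union of intervals from `S`, then `S` is up-closed
under `le`. -/
lemma aux_upclosed {α : Type} [DecidableEq α] {C : SimpComplex α}
    (V : DiscreteGradient C) {L : Finset (Finset α)}
    (hdown : ∀ σ ∈ L, ∀ ρ : Finset α, ρ.Nonempty → ρ ⊆ σ → ρ ∈ L)
    {S : Finset (Finset α × Finset α)} (hSP : S ⊆ V.P)
    (hiff : ∀ ψ ∈ C.K, (ψ ∉ L ↔ ∃ I ∈ S, I.1 ⊆ ψ ∧ ψ ⊆ I.2))
    {I J : Finset α × Finset α} (hI : I ∈ S) (h : V.le I J) : J ∈ S := by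
  induction h with
  | refl => exact hI
  | tail _ step ih =>
    obtain ⟨hbP, hcP, σ', τ, h1, h2, h3, h4, h5⟩ := step
    have hσ'K : σ' ∈ C.K := V.interval_mem _ hbP σ' h1 h2
    have hτK : τ ∈ C.K := V.interval_mem _ hcP τ h3 h4
    have hσ'L : σ' ∉ L := (hiff σ' hσ'K).mpr ⟨_, ih, h1, h2⟩
    have hτL : τ ∉ L := fun hτ => hσ'L (hdown τ hτ σ' (C.nonempty_mem σ' hσ'K) h5)
    obtain ⟨J', hJ'S, hJ'1, hJ'2⟩ := (hiff τ hτK).mp hτL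
    obtain ⟨I', hI'⟩ := V.partition τ hτK
    have e1 : J' = I' := hI'.2 J' ⟨hSP hJ'S, hJ'1, hJ'2⟩
    have e2 : _ = I' := hI'.2 _ ⟨hcP, h3, h4⟩
    rwa [e2, ← e1]

open Classical in
/-- The descending complex `D(V)` is the smallest subcomplex `L` of `K` such that
`K \ L` is a disjoint union of regular intervals of `V`: `K \ D(V)` is such a disjoint
union, and any subcomplex `L` with this property contains `D(V)`. -/
theorem stmt4 {α : Type} [DecidableEq α] {C : SimpComplex α} (V : DiscreteGradient C) :
    CollapsibleCompl V (V.descCpx (C.K.filter fun σ => V.IsCrit σ)) ∧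
    ∀ L : Finset (Finset α), CollapsibleCompl V L →
      V.descCpx (C.K.filter fun σ => V.IsCrit σ) ⊆ L := by
  set Cs := C.K.filter fun σ => V.IsCrit σ with hCs
  set D := V.descCpx Cs with hD
  have hmemD : ∀ ψ, ψ ∈ D ↔ ψ ∈ C.K ∧
      ∃ I ∈ V.P, I.1 ⊆ ψ ∧ ψ ⊆ I.2 ∧ ∃ σ ∈ Cs, V.le I (σ, σ) := by
    intro ψ; simp [hD, DiscreteGradient.descCpx]
  constructor
  · refine ⟨Finset.filter_subset _ _, ?_, ?_⟩
    · -- down closed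
      intro ψ hψ ρ hρne hρψ
      obtain ⟨hψK, I, hIP, hI1, hI2, σ, hσCs, hle⟩ := (hmemD ψ).mp hψ
      have hρK : ρ ∈ C.K := C.down_closed ψ hψK ρ hρne hρψ
      obtain ⟨J, ⟨⟨hJP, hJ1, hJ2⟩, _⟩⟩ := V.partition ρ hρK
      have hstep : V.stepRel J I := ⟨hJP, hIP, ρ, ψ, hJ1, hJ2, hI1, hI2, hρψ⟩
      exact (hmemD ρ).mpr ⟨hρK, J, hJP, hJ1, hJ2, σ, hσCs,
        Relation.ReflTransGen.head hstep hle⟩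
    · -- complement is union of regular intervals
      refine ⟨V.P.filter (fun I => ¬ ∃ σ ∈ Cs, V.le I (σ, σ)),
        Finset.filter_subset _ _, ?_, ?_⟩
      · intro I hI hIeq
        rw [Finset.mem_filter] at hI
        obtain ⟨hIP, hnot⟩ := hI
        have hIform : I = (I.1, I.1) := by
          ext <;> simp [hIeq]
        have hI1K : I.1 ∈ C.K := V.interval_mem I hIP I.1 subset_rfl (hIform ▸ subset_rfl)
        refine hnot ⟨I.1, ?_, ?_⟩
        · simp only [hCs, Finset.mem_filter]
          exact ⟨hI1K, show (I.1, I.1) ∈ V.P from hIform ▸ hIP⟩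
        · rw [← hIform]; exact Relation.ReflTransGen.refl
      · intro ψ hψK
        obtain ⟨I, ⟨⟨hIP, hI1, hI2⟩, huniq⟩⟩ := V.partition ψ hψK
        constructor
        · intro hψD
          refine ⟨I, Finset.mem_filter.mpr ⟨hIP, ?_⟩, hI1, hI2⟩
          rintro ⟨σ, hσCs, hle⟩
          exact hψD ((hmemD ψ).mpr ⟨hψK, I, hIP, hI1, hI2, σ, hσCs, hle⟩)
        · rintro ⟨J, hJS, hJ1, hJ2⟩ hψD
          rw [Finset.mem_filter] at hJS
          obtain ⟨_, I', hI'P, hI'1, hI'2, σ, hσCs, hle⟩ := (hmemD ψ).mp hψD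
          have e1 : J = I := huniq J ⟨hJS.1, hJ1, hJ2⟩
          have e2 : I' = I := huniq I' ⟨hI'P, hI'1, hI'2⟩
          exact hJS.2 ⟨σ, hσCs, (e1.trans e2.symm) ▸ hle⟩
  · -- minimality
    intro L hL ψ hψD
    obtain ⟨hLK, hdown, S, hSP, hreg, hiff⟩ := hL
    obtain ⟨hψK, I, hIP, hI1, hI2, σ, hσCs, hle⟩ := (hmemD ψ).mp hψD
    by_contra hψL
    obtain ⟨J, hJS, hJ1, hJ2⟩ := (hiff ψ hψK).mp hψL
    obtain ⟨I', hI'⟩ := V.partition ψ hψK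
    have e1 : J = I' := hI'.2 J ⟨hSP hJS, hJ1, hJ2⟩
    have e2 : I = I' := hI'.2 I ⟨hIP, hI1, hI2⟩
    have hIS : I ∈ S := by rw [e2, ← e1]; exact hJS
    have hcrit : (σ, σ) ∈ S := aux_upclosed V hdown hSP hiff hIS hle
    exact hreg _ hcrit rfl
end

section
/- Let Φ be the flow of an algebraic gradient V on a based chain complex. Then there exists a natural number r such that Φ^s = Φ^r for all s ≥ r, i.e., the sequence of iterated flows stabilizes. -/
open Classical Finset

/-!
Write `Φ` as a matrix, view a pair `(σ, τ) ∈ V` as an arrow from its tail `σ` to its head `τ`,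
and order the basis by the Morse function `f`. Off the diagonal, `Φ` only sends a basis element
`σ` to elements of strictly smaller `f`-value; its diagonal entry is `0` when `σ` is matched and
`1` when `σ` is critical; and when `σ` is critical or a head, the off-diagonal part of `Φ σ`
consists of heads. By well-founded induction on `f`, every head is killed by a power of `Φ`.
Again by induction, every basis vector has an eventually constant orbit: for a matched `σ`,
`Φ σ` is a combination of lower elements; for a critical `σ`, `Φ σ - σ` is a combination of heads.
-/

open Filter

namespace Module.End

section Semiring

variable {R M : Type*} [Semiring R] [AddCommMonoid M] [Module R M] (T : Module.End R M)

def eventuallyStable : Submodule R M where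
  carrier := {v | ∀ᶠ k in atTop, (T ^ (k + 1)) v = (T ^ k) v}
  add_mem' ha hb := (ha.and hb).mono fun k h => by simp only [map_add, h.1, h.2]
  zero_mem' := .of_forall fun k => by simp only [map_zero]
  smul_mem' c _ hv := hv.mono fun k h => by simp only [map_smul, h]

variable {T}

lemma mem_eventuallyStable_of_apply_mem {v : M} (h : T v ∈ T.eventuallyStable) :
    v ∈ T.eventuallyStable := by
  change ∀ᶠ k in atTop, _
  rw [← map_add_atTop_eq_nat 1, eventually_map]
  exact h.mono fun k hk => by rwa [pow_succ, mul_apply, pow_succ, mul_apply]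

lemma exists_pow_eq_pow_of_eventuallyStable_eq_top [Module.Finite R M]
    (h : T.eventuallyStable = ⊤) : ∃ r, ∀ s, r ≤ s → T ^ s = T ^ r := by
  obtain ⟨G, hG⟩ := Module.Finite.fg_top (R := R) (M := M)
  have hstep : ∀ᶠ k in atTop, T ^ (k + 1) = T ^ k := by
    filter_upwards [(eventually_all_finset G).mpr fun g _ =>
      (h ▸ Submodule.mem_top : g ∈ T.eventuallyStable)] with k hk
    exact LinearMap.ext_on hG hk
  obtain ⟨r, hr⟩ := eventually_atTop.mp hstep
  refine ⟨r, fun s hs => ?_⟩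
  induction s, hs using Nat.le_induction with
  | base => rfl
  | succ s hs ih => rw [hr s hs, ih]

end Semiring

section CommRing

variable {R M : Type*} [CommRing R] [AddCommGroup M] [Module R M] {T : Module.End R M} {v : M}

lemma mem_maxGenEigenspace_zero_iff : v ∈ T.maxGenEigenspace 0 ↔ ∃ k, (T ^ k) v = 0 := by
  simp only [mem_maxGenEigenspace, zero_smul, sub_zero]

lemma mem_maxGenEigenspace_zero_of_apply_mem (h : T v ∈ T.maxGenEigenspace 0) :
    v ∈ T.maxGenEigenspace 0 := by
  obtain ⟨k, hk⟩ := mem_maxGenEigenspace_zero_iff.mp h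
  exact mem_maxGenEigenspace_zero_iff.mpr ⟨k + 1, by rwa [pow_succ, mul_apply]⟩

lemma mem_eventuallyStable_of_apply_sub_mem (h : T v - v ∈ T.maxGenEigenspace 0) :
    v ∈ T.eventuallyStable := by
  obtain ⟨n, hn⟩ := mem_maxGenEigenspace_zero_iff.mp h
  filter_upwards [eventually_ge_atTop n] with k hk
  rw [← sub_eq_zero, pow_succ, mul_apply, ← map_sub]
  exact pow_map_zero_of_le hk hn

end CommRing

end Module.End

namespace Matrix

variable {ι R : Type*} [Fintype ι] [DecidableEq ι]

lemma mulVec_single_one_sub_mem [Ring R] (M : Matrix ι ι R) {S : Submodule R (ι → R)} {j : ι}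
    (h : ∀ i, i ≠ j → M i j ≠ 0 → Pi.single i 1 ∈ S) :
    M *ᵥ Pi.single j 1 - M j j • Pi.single j 1 ∈ S := by
  have hcol : M *ᵥ Pi.single j 1 = ∑ i, M i j • Pi.single i 1 := by
    ext i'
    simp [Finset.sum_apply, Pi.single_apply]
  rw [hcol, ← Finset.add_sum_erase _ _ (Finset.mem_univ j), add_sub_cancel_left]
  refine Submodule.sum_mem _ fun i hi => ?_
  by_cases hM : M i j = 0
  · simp [hM]
  · exact S.smul_mem _ (h i (Finset.ne_of_mem_erase hi) hM)

theorem exists_pow_eq_pow_of_offDiag_lt [CommRing R] {α : Type*} [Preorder α]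
    (M : Matrix ι ι R) (f : ι → α) (H : ι → Prop)
    (hlt : ∀ i j, i ≠ j → M i j ≠ 0 → f i < f j)
    (hH : ∀ j, H j → M j j = 0 ∧ ∀ i, i ≠ j → M i j ≠ 0 → H i)
    (hdiag : ∀ j, M j j = 0 ∨ M j j = 1 ∧ ∀ i, i ≠ j → M i j ≠ 0 → H i) :
    ∃ r, ∀ s, r ≤ s → M ^ s = M ^ r := by
  set T : Module.End R (ι → R) := toLin' M
  have hwf : WellFounded fun i j => f i < f j := Finite.wellFounded_of_trans_of_irrefl _
  have hnil : ∀ j, H j → Pi.single j 1 ∈ T.maxGenEigenspace 0 := by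
    intro j
    induction j using hwf.induction with
    | _ j ih =>
      intro hj
      obtain ⟨hjj, hcol⟩ := hH j hj
      apply Module.End.mem_maxGenEigenspace_zero_of_apply_mem
      simpa [T, hjj] using M.mulVec_single_one_sub_mem fun i hij hM =>
        ih i (hlt i j hij hM) (hcol i hij hM)
  have hstab : ∀ j, Pi.single j 1 ∈ T.eventuallyStable := by
    intro j
    induction j using hwf.induction with
    | _ j ih =>
      rcases hdiag j with hjj | ⟨hjj, hcol⟩
      · apply Module.End.mem_eventuallyStable_of_apply_mem
        simpa [T, hjj] using M.mulVec_single_one_sub_mem fun i hij hM => ih i (hlt i j hij hM)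
      · apply Module.End.mem_eventuallyStable_of_apply_sub_mem
        simpa [T, hjj] using M.mulVec_single_one_sub_mem fun i hij hM => hnil i (hcol i hij hM)
  have htop : T.eventuallyStable = ⊤ := by
    rw [eq_top_iff, ← (Pi.basisFun R ι).span_eq, Submodule.span_le]
    rintro _ ⟨j, rfl⟩
    simpa using hstab j
  obtain ⟨r, hr⟩ := Module.End.exists_pow_eq_pow_of_eventuallyStable_eq_top htop
  exact ⟨r, fun s hs => toLin'.injective (by rw [toLin'_pow, toLin'_pow, hr s hs])⟩

end Matrix

namespace BasedChainComplex

open Matrix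

variable {𝕜 : Type} [Field 𝕜] {l : ℕ} (C : BasedChainComplex 𝕜 l) (V : Finset (Fin l × Fin l))

def homotopyMatrix : Matrix (Fin l) (Fin l) 𝕜 :=
  fun j i => if (i, j) ∈ V then -(C.D i j)⁻¹ else 0

def flowMatrix : Matrix (Fin l) (Fin l) 𝕜 :=
  1 + C.D * C.homotopyMatrix V + C.homotopyMatrix V * C.D

lemma Fmap_eq_mulVec (c : Fin l → 𝕜) : C.Fmap V c = C.homotopyMatrix V *ᵥ c := by
  funext j
  simp [Fmap, homotopyMatrix, Matrix.mulVec, dotProduct]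

lemma flow_eq_mulVec (c : Fin l → 𝕜) : C.flow V c = C.flowMatrix V *ᵥ c := by
  rw [flow, flowMatrix, Fmap_eq_mulVec, Fmap_eq_mulVec, Matrix.add_mulVec, Matrix.add_mulVec,
    Matrix.one_mulVec, Matrix.mulVec_mulVec, Matrix.mulVec_mulVec]

lemma iterate_flow_eq_pow_mulVec (s : ℕ) (c : Fin l → 𝕜) :
    (C.flow V)^[s] c = (C.flowMatrix V ^ s) *ᵥ c := by
  induction s generalizing c with
  | zero => simp
  | succ s ih =>
    rw [Function.iterate_succ_apply, flow_eq_mulVec, ih, Matrix.mulVec_mulVec, ← pow_succ]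

def IsHead (j : Fin l) : Prop := ∃ i, (i, j) ∈ V

def IsTail (j : Fin l) : Prop := ∃ k, (j, k) ∈ V

variable {C V}

section Matching

variable (hdisj : ∀ p ∈ V, ∀ q ∈ V, p ≠ q → p.1 ≠ q.1 ∧ p.1 ≠ q.2 ∧ p.2 ≠ q.1 ∧ p.2 ≠ q.2)
include hdisj

lemma eq_of_mem_of_mem_of_snd_eq {i i' j : Fin l} (h : (i, j) ∈ V) (h' : (i', j) ∈ V) :
    i = i' := by
  by_contra hne
  exact (hdisj _ h _ h' (by simp [hne])).2.2.2 rfl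

lemma eq_of_mem_of_mem_of_fst_eq {i j j' : Fin l} (h : (i, j) ∈ V) (h' : (i, j') ∈ V) :
    j = j' := by
  by_contra hne
  exact (hdisj _ h _ h' (by simp [hne])).1 rfl

lemma D_mul_homotopyMatrix_apply_of_mem {j τ : Fin l} (hτ : (j, τ) ∈ V) (i : Fin l) :
    (C.D * C.homotopyMatrix V) i j = -(C.D j τ)⁻¹ * C.D i τ := by
  rw [Matrix.mul_apply, Finset.sum_eq_single τ]
  · rw [homotopyMatrix, if_pos hτ]; ring
  · intro k _ hk
    have hkV : (j, k) ∉ V := fun hm => hk (eq_of_mem_of_mem_of_fst_eq hdisj hm hτ)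
    simp [homotopyMatrix, hkV]
  · simp

lemma homotopyMatrix_mul_D_apply_of_mem {μ i : Fin l} (hμ : (μ, i) ∈ V) (j : Fin l) :
    (C.homotopyMatrix V * C.D) i j = -(C.D μ i)⁻¹ * C.D μ j := by
  rw [Matrix.mul_apply, Finset.sum_eq_single μ]
  · rw [homotopyMatrix, if_pos hμ]
  · intro k _ hk
    have hkV : (k, i) ∉ V := fun hm => hk (eq_of_mem_of_mem_of_snd_eq hdisj hm hμ)
    simp [homotopyMatrix, hkV]
  · simp

end Matching

lemma D_mul_homotopyMatrix_apply_of_not_isTail {j : Fin l} (hj : ¬ IsTail V j) (i : Fin l) :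
    (C.D * C.homotopyMatrix V) i j = 0 :=
  (Matrix.mul_apply ..).trans <| Finset.sum_eq_zero fun k _ => by
    simp [homotopyMatrix, show (j, k) ∉ V from fun hm => hj ⟨k, hm⟩]

lemma homotopyMatrix_mul_D_apply_of_not_isHead {i : Fin l} (hi : ¬ IsHead V i) (j : Fin l) :
    (C.homotopyMatrix V * C.D) i j = 0 :=
  (Matrix.mul_apply ..).trans <| Finset.sum_eq_zero fun k _ => by
    simp [homotopyMatrix, show (k, i) ∉ V from fun hm => hi ⟨k, hm⟩]

lemma flowMatrix_apply_of_ne {i j : Fin l} (hij : i ≠ j) :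
    C.flowMatrix V i j = (C.D * C.homotopyMatrix V) i j + (C.homotopyMatrix V * C.D) i j := by
  simp [flowMatrix, Matrix.one_apply_ne hij]

lemma isHead_of_flowMatrix_apply_ne_zero {i j : Fin l} (hj : ¬ IsTail V j) (hij : i ≠ j)
    (h : C.flowMatrix V i j ≠ 0) : IsHead V i := by
  by_contra hi
  rw [flowMatrix_apply_of_ne hij, D_mul_homotopyMatrix_apply_of_not_isTail hj,
    homotopyMatrix_mul_D_apply_of_not_isHead hi, add_zero] at h
  exact h rfl

lemma flowMatrix_apply_self_of_critical {j : Fin l} (hh : ¬ IsHead V j) (ht : ¬ IsTail V j) :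
    C.flowMatrix V j j = 1 := by
  simp [flowMatrix, D_mul_homotopyMatrix_apply_of_not_isTail ht,
    homotopyMatrix_mul_D_apply_of_not_isHead hh]

lemma lt_of_isFacet_of_not_mem {f : Fin l → ℝ} (hmono : ∀ i j, C.IsFacet i j → f i ≤ f j)
    (hiff : ∀ i j, C.IsFacet i j → (f i = f j ↔ (i, j) ∈ V)) {i j : Fin l} (h : C.IsFacet i j)
    (hV : (i, j) ∉ V) : f i < f j :=
  (hmono i j h).lt_of_ne fun he => hV ((hiff i j h).mp he)

section Gradient

variable (hfac : ∀ p ∈ V, C.IsFacet p.1 p.2)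
  (hdisj : ∀ p ∈ V, ∀ q ∈ V, p ≠ q → p.1 ≠ q.1 ∧ p.1 ≠ q.2 ∧ p.2 ≠ q.1 ∧ p.2 ≠ q.2)
include hfac hdisj

lemma not_isTail_of_isHead {j : Fin l} (hj : IsHead V j) : ¬ IsTail V j := by
  rintro ⟨k, hk⟩
  obtain ⟨i, hi⟩ := hj
  have hne : (i, j) ≠ (j, k) := fun h => (C.filt i j (hfac _ hi)).ne (congrArg Prod.fst h)
  exact (hdisj _ hi _ hk hne).2.2.1 rfl

lemma flowMatrix_apply_self_of_isTail {j : Fin l} (hj : IsTail V j) :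
    C.flowMatrix V j j = 0 := by
  obtain ⟨τ, hτ⟩ := hj
  have hnh : ¬ IsHead V j := fun h => not_isTail_of_isHead hfac hdisj h ⟨τ, hτ⟩
  have hD : C.D j τ ≠ 0 := hfac _ hτ
  simp [flowMatrix, D_mul_homotopyMatrix_apply_of_mem hdisj hτ,
    homotopyMatrix_mul_D_apply_of_not_isHead hnh, hD]

lemma flowMatrix_apply_self_of_isHead {j : Fin l} (hj : IsHead V j) :
    C.flowMatrix V j j = 0 := by
  obtain ⟨μ, hμ⟩ := hj
  have hD : C.D μ j ≠ 0 := hfac _ hμ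
  simp [flowMatrix, homotopyMatrix_mul_D_apply_of_mem hdisj hμ,
    D_mul_homotopyMatrix_apply_of_not_isTail (not_isTail_of_isHead hfac hdisj ⟨μ, hμ⟩), hD]

lemma lt_of_flowMatrix_apply_ne_zero {f : Fin l → ℝ}
    (hmono : ∀ i j, C.IsFacet i j → f i ≤ f j)
    (hiff : ∀ i j, C.IsFacet i j → (f i = f j ↔ (i, j) ∈ V)) {i j : Fin l} (hij : i ≠ j)
    (h : C.flowMatrix V i j ≠ 0) : f i < f j := by
  rw [flowMatrix_apply_of_ne hij] at h
  by_cases hDF : (C.D * C.homotopyMatrix V) i j = 0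
  · rw [hDF, zero_add] at h
    by_cases hi : IsHead V i
    · obtain ⟨μ, hμ⟩ := hi
      rw [homotopyMatrix_mul_D_apply_of_mem hdisj hμ] at h
      have hfacet : C.IsFacet μ j := right_ne_zero_of_mul h
      have hnot : (μ, j) ∉ V := fun hm => hij (eq_of_mem_of_mem_of_fst_eq hdisj hμ hm)
      rw [← (hiff μ i (hfac _ hμ)).mpr hμ]
      exact lt_of_isFacet_of_not_mem hmono hiff hfacet hnot
    · exact absurd (homotopyMatrix_mul_D_apply_of_not_isHead hi j) h
  · by_cases hj : IsTail V j
    · obtain ⟨τ, hτ⟩ := hj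
      rw [D_mul_homotopyMatrix_apply_of_mem hdisj hτ] at hDF
      have hfacet : C.IsFacet i τ := right_ne_zero_of_mul hDF
      have hnot : (i, τ) ∉ V := fun hm => hij (eq_of_mem_of_mem_of_snd_eq hdisj hm hτ)
      rw [(hiff j τ (hfac _ hτ)).mpr hτ]
      exact lt_of_isFacet_of_not_mem hmono hiff hfacet hnot
    · exact absurd (D_mul_homotopyMatrix_apply_of_not_isTail hj i) hDF

end Gradient

theorem exists_pow_flowMatrix_eq_pow (hV : C.IsAlgGradient V) :
    ∃ r, ∀ s, r ≤ s → C.flowMatrix V ^ s = C.flowMatrix V ^ r := by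
  obtain ⟨hfac, hdisj, f, hmono, hiff⟩ := hV
  refine (C.flowMatrix V).exists_pow_eq_pow_of_offDiag_lt f (IsHead V)
    (fun i j => lt_of_flowMatrix_apply_ne_zero hfac hdisj hmono hiff)
    (fun j hj => ⟨flowMatrix_apply_self_of_isHead hfac hdisj hj, fun i hij =>
      isHead_of_flowMatrix_apply_ne_zero (not_isTail_of_isHead hfac hdisj hj) hij⟩)
    (fun j => ?_)
  by_cases ht : IsTail V j
  · exact .inl (flowMatrix_apply_self_of_isTail hfac hdisj ht)
  by_cases hh : IsHead V j
  · exact .inl (flowMatrix_apply_self_of_isHead hfac hdisj hh)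
  exact .inr ⟨flowMatrix_apply_self_of_critical hh ht, fun i hij =>
    isHead_of_flowMatrix_apply_ne_zero ht hij⟩

end BasedChainComplex

/-- The iterated flows of an algebraic gradient on a based chain complex stabilize:
there is an `r` such that `Φ^s = Φ^r` for all `s ≥ r`. -/
theorem stmt6 {𝕜 : Type} [Field 𝕜] {l : ℕ} (C : BasedChainComplex 𝕜 l)
    (V : Finset (Fin l × Fin l)) (hV : C.IsAlgGradient V) :
    ∃ r : ℕ, ∀ s : ℕ, r ≤ s → (C.flow V)^[s] = (C.flow V)^[r] := by
  obtain ⟨r, hr⟩ := C.exists_pow_flowMatrix_eq_pow hV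
  refine ⟨r, fun s hs => funext fun c => ?_⟩
  rw [C.iterate_flow_eq_pow_mulVec, C.iterate_flow_eq_pow_mulVec, hr s hs]
end

section
/- Let σ be a critical basis element of an algebraic gradient V with flow Φ and chain homotopy F, and set w = F(∂σ). Then for all natural numbers r, Φ^{r+1}(σ) = σ + w + Φ(w) + ... + Φ^r(w); moreover Φ^s(w) lies in the image of F for all s, and F(Φ^{r+1}(σ)) = 0. -/
open Classical Finset

section Aux

variable {𝕜 : Type} [Field 𝕜] {l : ℕ} (C : BasedChainComplex 𝕜 l)
  (V : Finset (Fin l × Fin l))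

lemma aux_Fmap_add (c d : Fin l → 𝕜) :
    C.Fmap V (c + d) = C.Fmap V c + C.Fmap V d := by
  funext j
  simp [BasedChainComplex.Fmap, mul_add, Finset.sum_add_distrib]

lemma aux_Fmap_zero : C.Fmap V (0 : Fin l → 𝕜) = 0 := by
  funext j; simp [BasedChainComplex.Fmap]

lemma aux_Fmap_pair_zero (hV : C.IsAlgGradient V) (c : Fin l → 𝕜) {i j : Fin l}
    (hij : (i, j) ∈ V) : C.Fmap V c i = 0 := by
  unfold BasedChainComplex.Fmap
  apply Finset.sum_eq_zero
  intro m _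
  have hmi : (m, i) ∉ V := by
    intro hmem
    by_cases heq : ((m, i) : Fin l × Fin l) = (i, j)
    · have : i = j := by
        have := (Prod.mk.injEq m i i j).mp heq
        exact this.2
      have hfac := hV.1 _ hij
      have := C.filt i j hfac
      omega
    · have := (hV.2.1 _ hmem _ hij heq).2.2.1
      exact this rfl
  simp [hmi]

lemma aux_Fmap_Fmap (hV : C.IsAlgGradient V) (c : Fin l → 𝕜) :
    C.Fmap V (C.Fmap V c) = 0 := by
  funext j
  rw [show C.Fmap V (C.Fmap V c) j =
      ∑ i, (if (i, j) ∈ V then -(C.D i j)⁻¹ else 0) * (C.Fmap V c i) from rfl]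
  show _ = (0 : Fin l → 𝕜) j
  rw [Pi.zero_apply]
  apply Finset.sum_eq_zero
  intro i _
  by_cases hij : (i, j) ∈ V
  · rw [aux_Fmap_pair_zero C V hV c hij, mul_zero]
  · simp [hij]

lemma aux_flow_add (c d : Fin l → 𝕜) :
    C.flow V (c + d) = C.flow V c + C.flow V d := by
  unfold BasedChainComplex.flow
  rw [Matrix.mulVec_add, aux_Fmap_add, aux_Fmap_add, Matrix.mulVec_add]
  abel

lemma aux_flow_Fmap (hV : C.IsAlgGradient V) (c : Fin l → 𝕜) :
    C.flow V (C.Fmap V c) = C.Fmap V (c + C.D.mulVec (C.Fmap V c)) := by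
  unfold BasedChainComplex.flow
  rw [aux_Fmap_Fmap C V hV, Matrix.mulVec_zero, aux_Fmap_add]
  abel

lemma aux_flow_sum {n : ℕ} (f : ℕ → Fin l → 𝕜) :
    C.flow V (∑ k ∈ Finset.range n, f k) = ∑ k ∈ Finset.range n, C.flow V (f k) := by
  induction n with
  | zero =>
      simp [BasedChainComplex.flow, aux_Fmap_zero]
  | succ n ih =>
      rw [Finset.sum_range_succ, Finset.sum_range_succ, aux_flow_add, ih]

end Aux

/-- For a critical basis element `σ` of an algebraic gradient `V` with flow `Φ` and chain
homotopy `F`, setting `w = F(∂σ)`, one has `Φ^{r+1}(σ) = σ + w + Φ(w) + … + Φ^r(w)` for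
all `r`; moreover `Φ^s(w)` lies in the image of `F` for all `s`, and `F(Φ^{r+1}(σ)) = 0`. -/
theorem stmt7 {𝕜 : Type} [Field 𝕜] {l : ℕ} (C : BasedChainComplex 𝕜 l)
    (V : Finset (Fin l × Fin l)) (hV : C.IsAlgGradient V)
    (a : Fin l) (ha : CriticalIn V a)
    (σ : Fin l → 𝕜) (hσ : σ = Pi.single a 1)
    (w : Fin l → 𝕜) (hw : w = C.Fmap V (C.D.mulVec σ)) :
    (∀ r : ℕ,
      (C.flow V)^[r + 1] σ = σ + ∑ k ∈ Finset.range (r + 1), (C.flow V)^[k] w) ∧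
    (∀ s : ℕ, ∃ c : Fin l → 𝕜, (C.flow V)^[s] w = C.Fmap V c) ∧
    (∀ r : ℕ, C.Fmap V ((C.flow V)^[r + 1] σ) = 0) := by
  -- F σ = 0 by criticality
  have hFσ : C.Fmap V σ = 0 := by
    funext j
    unfold BasedChainComplex.Fmap
    apply Finset.sum_eq_zero
    intro i _
    by_cases hia : i = a
    · subst hia
      have : (i, j) ∉ V := fun hmem => (ha _ hmem).1 rfl
      simp [this]
    · simp [hσ, Pi.single_eq_of_ne hia]
  have hΦσ : C.flow V σ = σ + w := by
    unfold BasedChainComplex.flow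
    rw [hFσ, Matrix.mulVec_zero, hw]
    abel
  -- part 2
  have h2 : ∀ s : ℕ, ∃ c : Fin l → 𝕜, (C.flow V)^[s] w = C.Fmap V c := by
    intro s
    induction s with
    | zero => exact ⟨C.D.mulVec σ, by simpa using hw⟩
    | succ s ih =>
        obtain ⟨c, hc⟩ := ih
        refine ⟨c + C.D.mulVec (C.Fmap V c), ?_⟩
        rw [Function.iterate_succ_apply', hc, aux_flow_Fmap C V hV]
  -- part 1
  have h1 : ∀ r : ℕ,
      (C.flow V)^[r + 1] σ = σ + ∑ k ∈ Finset.range (r + 1), (C.flow V)^[k] w := by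
    intro r
    induction r with
    | zero => simpa using hΦσ
    | succ r ih =>
        rw [Function.iterate_succ_apply', ih, aux_flow_add, aux_flow_sum, hΦσ]
        have hshift : ∀ k, C.flow V ((C.flow V)^[k] w) = (C.flow V)^[k + 1] w := by
          intro k; rw [Function.iterate_succ_apply']
        rw [Finset.sum_congr rfl fun k _ => hshift k,
          Finset.sum_range_succ' (fun k => (C.flow V)^[k] w) (r + 1)]
        simp only [Function.iterate_zero_apply]
        abel
  refine ⟨h1, h2, ?_⟩
  -- part 3: Φ^[r+1] σ = σ + F c for some c
  intro r
  have h4 : ∃ c : Fin l → 𝕜, (C.flow V)^[r + 1] σ = σ + C.Fmap V c := by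
    induction r with
    | zero => exact ⟨C.D.mulVec σ, by simpa [hw] using hΦσ⟩
    | succ r ih =>
        obtain ⟨c, hc⟩ := ih
        refine ⟨C.D.mulVec σ + (c + C.D.mulVec (C.Fmap V c)), ?_⟩
        rw [Function.iterate_succ_apply', hc, aux_flow_add, hΦσ,
          aux_flow_Fmap C V hV, hw]
        simp only [aux_Fmap_add]
        abel
  obtain ⟨c, hc⟩ := h4
  rw [hc, aux_Fmap_add, hFσ, aux_Fmap_Fmap C V hV]
  simp
end

section
/- The subspace of Φ-invariant n-chains of a based chain complex with algebraic gradient V is spanned by the images of the critical basis elements of degree n under the stabilized flow: C_n^Φ = span{Φ^∞(σ) : σ ∈ Σ_n critical}. -/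
open Classical Finset

noncomputable section Helpers

namespace StmtEight

open BasedChainComplex

variable {𝕜 : Type} [Field 𝕜] {l : ℕ} (C : BasedChainComplex 𝕜 l) (V : Finset (Fin l × Fin l))

lemma Fmap_add (c d : Fin l → 𝕜) : C.Fmap V (c + d) = C.Fmap V c + C.Fmap V d := by
  funext j
  simp [BasedChainComplex.Fmap, mul_add, Finset.sum_add_distrib]

lemma Fmap_smul (a : 𝕜) (c : Fin l → 𝕜) : C.Fmap V (a • c) = a • C.Fmap V c := by
  funext j
  simp only [BasedChainComplex.Fmap, Pi.smul_apply, smul_eq_mul, Finset.mul_sum]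
  exact Finset.sum_congr rfl fun i _ => by ring

lemma flow_add (c d : Fin l → 𝕜) : C.flow V (c + d) = C.flow V c + C.flow V d := by
  simp only [BasedChainComplex.flow, Matrix.mulVec_add, Fmap_add]
  abel

lemma flow_smul (a : 𝕜) (c : Fin l → 𝕜) : C.flow V (a • c) = a • C.flow V c := by
  simp only [BasedChainComplex.flow, Matrix.mulVec_smul, Fmap_smul, smul_add]

/-- The flow as a linear map. -/
def flowHom : (Fin l → 𝕜) →ₗ[𝕜] (Fin l → 𝕜) where
  toFun := C.flow V
  map_add' := flow_add C V
  map_smul' := flow_smul C V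

lemma flowHom_iterate (s : ℕ) (c : Fin l → 𝕜) :
    (C.flow V)^[s] c = ((flowHom C V) ^ s) c := by
  induction s generalizing c with
  | zero => simp
  | succ t ih =>
      rw [Function.iterate_succ_apply', ih, pow_succ']
      rfl

/-- `Φ^[r]` as a linear map. -/
def flowIterHom (s : ℕ) : (Fin l → 𝕜) →ₗ[𝕜] (Fin l → 𝕜) where
  toFun := (C.flow V)^[s]
  map_add' c d := by
    show (C.flow V)^[s] (c + d) = (C.flow V)^[s] c + (C.flow V)^[s] d
    rw [flowHom_iterate, flowHom_iterate, flowHom_iterate, map_add]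
  map_smul' a c := by
    show (C.flow V)^[s] (a • c) = a • (C.flow V)^[s] c
    rw [flowHom_iterate, flowHom_iterate, map_smul]

lemma flow_apply (c : Fin l → 𝕜) (j : Fin l) :
    C.flow V c j = c j + (∑ k, C.D j k * C.Fmap V c k) + C.Fmap V (C.D.mulVec c) j := by
  simp [BasedChainComplex.flow, Matrix.mulVec, dotProduct]

lemma mulVec_apply' (M : Matrix (Fin l) (Fin l) 𝕜) (v : Fin l → 𝕜) (i : Fin l) :
    M.mulVec v i = ∑ k, M i k * v k := by
  simp [Matrix.mulVec, dotProduct]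

/-- Support analysis of the flow: each index in the support of `Φ c` comes from one
of the three terms. -/
lemma flow_support (c : Fin l → 𝕜) (j : Fin l) (h : C.flow V c j ≠ 0) :
    c j ≠ 0 ∨ (∃ i k, c i ≠ 0 ∧ (i, k) ∈ V ∧ C.D j k ≠ 0) ∨
      (∃ i k, c k ≠ 0 ∧ (i, j) ∈ V ∧ C.D i k ≠ 0) := by
  by_contra hcon
  push_neg at hcon
  obtain ⟨h1, h2, h3⟩ := hcon
  apply h
  rw [flow_apply, h1]
  have t2 : (∑ k, C.D j k * C.Fmap V c k) = 0 := by
    refine Finset.sum_eq_zero fun k _ => ?_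
    by_cases hD : C.D j k = 0
    · rw [hD, zero_mul]
    · have : C.Fmap V c k = 0 := by
        refine Finset.sum_eq_zero fun i _ => ?_
        by_cases hik : (i, k) ∈ V
        · have : c i = 0 := by
            by_contra hci
            exact hD (h2 i k hci hik)
          rw [this, mul_zero]
        · simp [hik]
      rw [this, mul_zero]
  have t3 : C.Fmap V (C.D.mulVec c) j = 0 := by
    refine Finset.sum_eq_zero fun i _ => ?_
    by_cases hij : (i, j) ∈ V
    · have : C.D.mulVec c i = 0 := by
        rw [mulVec_apply']
        refine Finset.sum_eq_zero fun k _ => ?_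
        by_cases hk : c k = 0
        · rw [hk, mul_zero]
        · have : C.D i k = 0 := by
            by_contra hD
            exact hD (h3 i k hk hij)
          rw [this, zero_mul]
      rw [this, mul_zero]
    · simp [hij]
  rw [t2, t3]
  ring

end StmtEight

end Helpers
noncomputable section Helpers2

namespace StmtEight

open BasedChainComplex

variable {𝕜 : Type} [Field 𝕜] {l : ℕ} (C : BasedChainComplex 𝕜 l) (V : Finset (Fin l × Fin l))

variable {f : Fin l → ℝ}

/-- Value of the flow at an index maximizing `f` over the support:
the coefficient survives iff the index is critical. -/
lemma flow_apply_of_max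
    (hfacet : ∀ p ∈ V, C.IsFacet p.1 p.2)
    (hdisj : ∀ p ∈ V, ∀ q ∈ V, p ≠ q → p.1 ≠ q.1 ∧ p.1 ≠ q.2 ∧ p.2 ≠ q.1 ∧ p.2 ≠ q.2)
    (hm : ∀ i j, C.IsFacet i j → f i ≤ f j)
    (he : ∀ i j, C.IsFacet i j → (f i = f j ↔ (i, j) ∈ V))
    (c : Fin l → 𝕜) (j : Fin l) (hmax : ∀ i, c i ≠ 0 → f i ≤ f j) :
    C.flow V c j = if CriticalIn V j then c j else 0 := by
  have hfV : ∀ {i k : Fin l}, (i, k) ∈ V → f i = f k := fun {i k} hik =>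
    (he i k (hfacet _ hik)).mpr hik
  have hpair_ne : ∀ q ∈ V, (q : Fin l × Fin l).1 ≠ q.2 := fun q hq =>
    ne_of_lt (C.filt q.1 q.2 (hfacet _ hq))
  -- Term 2 analysis
  have t2 : (∑ k, C.D j k * C.Fmap V c k) = ∑ k, if (j, k) ∈ V then -(c j) else 0 := by
    refine Finset.sum_congr rfl fun k _ => ?_
    by_cases hD : C.D j k = 0
    · rw [hD, zero_mul]
      by_cases hjk : (j, k) ∈ V
      · exact absurd (hfacet _ hjk) (by simpa [BasedChainComplex.IsFacet] using hD)
      · simp [hjk]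
    · have hFk : C.Fmap V c k = if (j, k) ∈ V then -(C.D j k)⁻¹ * c j else 0 := by
        unfold BasedChainComplex.Fmap
        rw [Finset.sum_eq_single j]
        · by_cases hjk : (j, k) ∈ V <;> simp [hjk]
        · intro i _ hij
          by_cases hik : (i, k) ∈ V
          · by_cases hci : c i = 0
            · rw [hci, mul_zero]
            · exfalso
              have hfik : f i = f k := hfV hik
              have hjk_le : f j ≤ f k := hm j k hD
              have hik_le : f i ≤ f j := hmax i hci
              have : f j = f k := le_antisymm hjk_le (by linarith)
              have hjk : (j, k) ∈ V := (he j k hD).mp this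
              rcases eq_or_ne ((i, k) : Fin l × Fin l) (j, k) with heq | hne
              · exact hij (congrArg Prod.fst heq)
              · exact (hdisj _ hik _ hjk hne).2.2.2 rfl
          · simp [hik]
        · intro h; exact absurd (Finset.mem_univ j) h
      rw [hFk]
      by_cases hjk : (j, k) ∈ V
      · simp only [hjk, if_true]
        field_simp
      · simp [hjk]
  -- Term 3 analysis
  have t3 : C.Fmap V (C.D.mulVec c) j = ∑ i, if (i, j) ∈ V then -(c j) else 0 := by
    unfold BasedChainComplex.Fmap
    refine Finset.sum_congr rfl fun i _ => ?_
    by_cases hij : (i, j) ∈ V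
    · have hDij : C.D i j ≠ 0 := hfacet _ hij
      have hmv : C.D.mulVec c i = C.D i j * c j := by
        rw [mulVec_apply']
        rw [Finset.sum_eq_single j]
        · intro k _ hkj
          by_cases hck : c k = 0
          · rw [hck, mul_zero]
          · by_cases hDik : C.D i k = 0
            · rw [hDik, zero_mul]
            · exfalso
              have h1 : f i ≤ f k := hm i k hDik
              have h2 : f k ≤ f j := hmax k hck
              have h3 : f i = f j := hfV hij
              have : f i = f k := le_antisymm h1 (by linarith)
              have hik : (i, k) ∈ V := (he i k hDik).mp this
              rcases eq_or_ne ((i, k) : Fin l × Fin l) (i, j) with heq | hne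
              · exact hkj (congrArg Prod.snd heq)
              · exact (hdisj _ hik _ hij hne).1 rfl
        · intro h; exact absurd (Finset.mem_univ j) h
      rw [hmv]
      simp only [hij, if_true]
      field_simp
    · simp [hij]
  rw [flow_apply, t2, t3]
  by_cases hcrit : CriticalIn V j
  · have z2 : (∑ k, if (j, k) ∈ V then -(c j) else 0) = 0 :=
      Finset.sum_eq_zero fun k _ => by
        by_cases hjk : (j, k) ∈ V
        · exact absurd rfl (hcrit _ hjk).1
        · simp [hjk]
    have z3 : (∑ i, if (i, j) ∈ V then -(c j) else 0) = 0 :=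
      Finset.sum_eq_zero fun i _ => by
        by_cases hij : (i, j) ∈ V
        · exact absurd rfl (hcrit _ hij).2
        · simp [hij]
    rw [z2, z3, if_pos hcrit]
    ring
  · rw [if_neg hcrit]
    have hex : ∃ p ∈ V, (p : Fin l × Fin l).1 = j ∨ p.2 = j := by
      by_contra hno
      push_neg at hno
      exact hcrit fun p hp => ⟨(hno p hp).1, (hno p hp).2⟩
    obtain ⟨p, hp, hp1⟩ := hex
    rcases hp1 with h1 | h2
    · -- j lower-paired: (j, p.2) ∈ V
      have hjp : (j, p.2) ∈ V := by rwa [← h1, Prod.mk.eta]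
      have z3 : (∑ i, if (i, j) ∈ V then -(c j) else 0) = 0 :=
        Finset.sum_eq_zero fun i _ => by
          by_cases hij : (i, j) ∈ V
          · exfalso
            have hne : ((i, j) : Fin l × Fin l) ≠ (j, p.2) := fun heq =>
              hpair_ne _ hij (congrArg Prod.fst heq)
            exact (hdisj _ hij _ hjp hne).2.2.1 rfl
          · simp [hij]
      have z2 : (∑ k, if (j, k) ∈ V then -(c j) else 0) = -(c j) := by
        rw [Finset.sum_eq_single p.2]
        · rw [if_pos hjp]
        · intro k _ hkp
          by_cases hjk : (j, k) ∈ V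
          · exfalso
            have hne : ((j, k) : Fin l × Fin l) ≠ (j, p.2) := fun heq =>
              hkp (congrArg Prod.snd heq)
            exact (hdisj _ hjk _ hjp hne).1 rfl
          · simp [hjk]
        · intro h; exact absurd (Finset.mem_univ p.2) h
      rw [z2, z3]; ring
    · -- j upper-paired: (p.1, j) ∈ V
      have hpj : (p.1, j) ∈ V := by rwa [← h2, Prod.mk.eta]
      have z2 : (∑ k, if (j, k) ∈ V then -(c j) else 0) = 0 :=
        Finset.sum_eq_zero fun k _ => by
          by_cases hjk : (j, k) ∈ V
          · exfalso
            have hne : ((j, k) : Fin l × Fin l) ≠ (p.1, j) := fun heq =>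
              hpair_ne _ hjk (congrArg Prod.snd heq).symm
            exact (hdisj _ hjk _ hpj hne).2.1 rfl
          · simp [hjk]
      have z3 : (∑ i, if (i, j) ∈ V then -(c j) else 0) = -(c j) := by
        rw [Finset.sum_eq_single p.1]
        · rw [if_pos hpj]
        · intro i _ hip
          by_cases hij : (i, j) ∈ V
          · exfalso
            have hne : ((i, j) : Fin l × Fin l) ≠ (p.1, j) := fun heq =>
              hip (congrArg Prod.fst heq)
            exact (hdisj _ hij _ hpj hne).2.2.2 rfl
          · simp [hij]
        · intro h; exact absurd (Finset.mem_univ p.1) h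
      rw [z2, z3]; ring

end StmtEight

end Helpers2
noncomputable section Helpers3

namespace StmtEight

open BasedChainComplex

variable {𝕜 : Type} [Field 𝕜] {l : ℕ} (C : BasedChainComplex 𝕜 l) (V : Finset (Fin l × Fin l))

/-- The flow preserves the degree of homogeneous chains. -/
lemma flow_deg (hfacet : ∀ p ∈ V, C.IsFacet p.1 p.2) {n : ℕ} {c : Fin l → 𝕜}
    (h : ∀ i, c i ≠ 0 → C.deg i = n) : ∀ j, C.flow V c j ≠ 0 → C.deg j = n := by
  intro j hj
  rcases flow_support C V c j hj with h1 | ⟨i, k, hci, hik, hD⟩ | ⟨i, k, hck, hij, hD⟩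
  · exact h j h1
  · have e1 := C.homog i k (hfacet _ hik)
    have e2 := C.homog j k hD
    have := h i hci
    omega
  · have e1 := C.homog i j (hfacet _ hij)
    have e2 := C.homog i k hD
    have := h k hck
    omega

/-- The flow does not increase the maximal `f`-value of the support. -/
lemma flow_fbound {f : Fin l → ℝ}
    (hfacet : ∀ p ∈ V, C.IsFacet p.1 p.2)
    (hm : ∀ i j, C.IsFacet i j → f i ≤ f j)
    (he : ∀ i j, C.IsFacet i j → (f i = f j ↔ (i, j) ∈ V))
    {m : ℝ} {c : Fin l → 𝕜} (h : ∀ i, c i ≠ 0 → f i ≤ m) :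
    ∀ j, C.flow V c j ≠ 0 → f j ≤ m := by
  intro j hj
  rcases flow_support C V c j hj with h1 | ⟨i, k, hci, hik, hD⟩ | ⟨i, k, hck, hij, hD⟩
  · exact h j h1
  · have e1 : f i = f k := (he i k (hfacet _ hik)).mpr hik
    have e2 : f j ≤ f k := hm j k hD
    have := h i hci
    linarith
  · have e1 : f i = f j := (he i j (hfacet _ hij)).mpr hij
    have e2 : f i ≤ f k := hm i k hD
    have := h k hck
    linarith

end StmtEight

end Helpers3
/-- The `Φ`-invariant `n`-chains of a based chain complex with algebraic gradient `V` are
spanned by the images of the critical basis elements of degree `n` under the stabilized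
flow `Φ^∞ = Φ^r`. -/
theorem stmt8 {𝕜 : Type} [Field 𝕜] {l : ℕ} (C : BasedChainComplex 𝕜 l)
    (V : Finset (Fin l × Fin l)) (hV : C.IsAlgGradient V) (n : ℕ)
    (r : ℕ) (hr : ∀ s : ℕ, r ≤ s → (C.flow V)^[s] = (C.flow V)^[r]) :
    {c : Fin l → 𝕜 | (∀ i, c i ≠ 0 → C.deg i = n) ∧ C.flow V c = c} =
      ↑(Submodule.span 𝕜 {x : Fin l → 𝕜 | ∃ a : Fin l,
          CriticalIn V a ∧ C.deg a = n ∧ x = (C.flow V)^[r] (Pi.single a 1)}) := by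
  classical
  obtain ⟨hfacet, hdisj, f, hm, he⟩ := hV
  -- The invariant `n`-chains as a submodule `K`.
  let K : Submodule 𝕜 (Fin l → 𝕜) :=
    { carrier := {c | (∀ i, c i ≠ 0 → C.deg i = n) ∧ C.flow V c = c}
      add_mem' := by
        rintro a b ⟨ha1, ha2⟩ ⟨hb1, hb2⟩
        refine ⟨fun i hi => ?_, by rw [StmtEight.flow_add, ha2, hb2]⟩
        by_cases h : a i = 0
        · exact hb1 i (by simpa [h] using hi)
        · exact ha1 i h
      zero_mem' := by
        refine ⟨fun i hi => absurd rfl hi, ?_⟩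
        have := StmtEight.flow_smul C V (0 : 𝕜) (0 : Fin l → 𝕜)
        simpa using this
      smul_mem' := by
        rintro a c ⟨h1, h2⟩
        refine ⟨fun i hi => h1 i fun hc => hi (by simp [hc]), ?_⟩
        rw [StmtEight.flow_smul, h2] }
  -- The index type of critical basis elements of degree `n`.
  let T := {a : Fin l // CriticalIn V a ∧ C.deg a = n}
  let g : T → (Fin l → 𝕜) := fun a => (C.flow V)^[r] (Pi.single a.1 1)
  have hgen : {x : Fin l → 𝕜 | ∃ a : Fin l,
      CriticalIn V a ∧ C.deg a = n ∧ x = (C.flow V)^[r] (Pi.single a 1)} = Set.range g := by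
    ext x
    constructor
    · rintro ⟨a, h1, h2, h3⟩
      exact ⟨⟨a, h1, h2⟩, h3.symm⟩
    · rintro ⟨a, rfl⟩
      exact ⟨a.1, a.2.1, a.2.2, rfl⟩
  -- Iterates of the flow preserve homogeneity of degree `n`.
  have hdeg_iter : ∀ (s : ℕ) (c : Fin l → 𝕜), (∀ i, c i ≠ 0 → C.deg i = n) →
      ∀ i, (C.flow V)^[s] c i ≠ 0 → C.deg i = n := by
    intro s
    induction s with
    | zero => intro c hc; simpa using hc
    | succ t ih =>
        intro c hc i hi
        rw [Function.iterate_succ_apply'] at hi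
        exact StmtEight.flow_deg C V hfacet (ih c hc) i hi
  -- The span of the stabilized critical chains is contained in `K`.
  have hSK : Submodule.span 𝕜 (Set.range g) ≤ K := by
    rw [Submodule.span_le]
    rintro x ⟨a, rfl⟩
    constructor
    · refine hdeg_iter r (Pi.single a.1 1) ?_
      intro i hi
      have : i = a.1 := by
        by_contra hne
        exact hi (by simp [Pi.single_apply, hne])
      rw [this]; exact a.2.2
    · show C.flow V ((C.flow V)^[r] (Pi.single a.1 1)) = (C.flow V)^[r] (Pi.single a.1 1)
      calc C.flow V ((C.flow V)^[r] (Pi.single a.1 1))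
          = (C.flow V)^[r + 1] (Pi.single a.1 1) :=
            (Function.iterate_succ_apply' (C.flow V) r _).symm
        _ = (C.flow V)^[r] (Pi.single a.1 1) :=
            congrFun (hr (r + 1) (Nat.le_succ r)) _
  -- Key injectivity: an invariant chain vanishing on all critical cells is zero.
  have hinj : ∀ c : Fin l → 𝕜, C.flow V c = c → (∀ a, CriticalIn V a → c a = 0) → c = 0 := by
    intro c hflow hvan
    by_contra hc0
    obtain ⟨j₀, hj₀⟩ := Function.ne_iff.mp hc0
    have hne : (Finset.univ.filter (fun i => c i ≠ 0)).Nonempty :=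
      ⟨j₀, Finset.mem_filter.mpr ⟨Finset.mem_univ _, by simpa using hj₀⟩⟩
    obtain ⟨j, hjs, hjmax⟩ := Finset.exists_max_image _ f hne
    have hcj : c j ≠ 0 := (Finset.mem_filter.mp hjs).2
    have hmax : ∀ i, c i ≠ 0 → f i ≤ f j := fun i hi =>
      hjmax i (Finset.mem_filter.mpr ⟨Finset.mem_univ _, hi⟩)
    have hkey := StmtEight.flow_apply_of_max C V hfacet hdisj hm he c j hmax
    rw [hflow] at hkey
    by_cases hcrit : CriticalIn V j
    · exact hcj (hvan j hcrit)
    · rw [if_neg hcrit] at hkey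
      exact hcj hkey
  -- The restriction to critical coordinates, as an injective linear map on `K`.
  let R : K →ₗ[𝕜] (T → 𝕜) :=
    { toFun := fun c a => (c : Fin l → 𝕜) a.1
      map_add' := fun x y => rfl
      map_smul' := fun m x => rfl }
  have hRinj : Function.Injective R := by
    rw [injective_iff_map_eq_zero]
    rintro ⟨c, hc1, hc2⟩ hx
    have hvan : ∀ a, CriticalIn V a → c a = 0 := by
      intro a ha
      by_cases hd : C.deg a = n
      · exact congrFun hx ⟨a, ha, hd⟩
      · by_contra hca
        exact hd (hc1 a hca)
    have : c = 0 := hinj c hc2 hvan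
    exact Subtype.ext this
  have hrankK : Module.finrank 𝕜 K ≤ Fintype.card T := by
    have := LinearMap.finrank_le_finrank_of_injective hRinj
    rwa [Module.finrank_fintype_fun_eq_card] at this
  -- The stabilized critical chains are linearly independent.
  have hli : LinearIndependent 𝕜 g := by
    rw [Fintype.linearIndependent_iff]
    intro u hsum a₀
    by_contra hu0
    set c : Fin l → 𝕜 := ∑ a : T, u a • (Pi.single a.1 1 : Fin l → 𝕜) with hc
    have hφc : (C.flow V)^[r] c = 0 := by
      have : StmtEight.flowIterHom C V r c = ∑ a : T, u a • g a := by
        rw [hc, map_sum]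
        exact Finset.sum_congr rfl fun a _ => by rw [map_smul]; rfl
      calc (C.flow V)^[r] c = StmtEight.flowIterHom C V r c := rfl
        _ = ∑ a : T, u a • g a := this
        _ = 0 := hsum
    have hcval : ∀ a : T, c a.1 = u a := by
      intro a
      rw [hc, Finset.sum_apply]
      rw [Finset.sum_eq_single a]
      · simp
      · intro b _ hba
        have : a.1 ≠ b.1 := fun h => hba (Subtype.ext h.symm)
        simp [Pi.single_apply, this]
      · intro h; exact absurd (Finset.mem_univ a) h
    have hzero_of : ∀ i, (∀ a : T, a.1 ≠ i) → c i = 0 := by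
      intro i hno
      rw [hc, Finset.sum_apply]
      refine Finset.sum_eq_zero fun a _ => ?_
      simp [Pi.single_apply, (hno a).symm, Ne.symm (hno a)]
    have hcsupp : ∀ i, c i ≠ 0 → CriticalIn V i := by
      intro i hi
      by_contra hcrit
      refine hi (hzero_of i fun a ha => hcrit ?_)
      rw [← ha]; exact a.2.1
    have hc0 : c a₀.1 ≠ 0 := by rw [hcval a₀]; exact hu0
    have hne : (Finset.univ.filter (fun i => c i ≠ 0)).Nonempty :=
      ⟨a₀.1, Finset.mem_filter.mpr ⟨Finset.mem_univ _, hc0⟩⟩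
    obtain ⟨j, hjs, hjmax⟩ := Finset.exists_max_image _ f hne
    have hcj : c j ≠ 0 := (Finset.mem_filter.mp hjs).2
    have hcritj : CriticalIn V j := hcsupp j hcj
    have hmax : ∀ i, c i ≠ 0 → f i ≤ f j := fun i hi =>
      hjmax i (Finset.mem_filter.mpr ⟨Finset.mem_univ _, hi⟩)
    have hiter : ∀ s : ℕ, (∀ i, (C.flow V)^[s] c i ≠ 0 → f i ≤ f j) ∧
        (C.flow V)^[s] c j = c j := by
      intro s
      induction s with
      | zero => exact ⟨hmax, rfl⟩
      | succ t ih =>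
          rw [Function.iterate_succ_apply']
          refine ⟨StmtEight.flow_fbound C V hfacet hm he ih.1, ?_⟩
          rw [StmtEight.flow_apply_of_max C V hfacet hdisj hm he _ j ih.1,
            if_pos hcritj, ih.2]
    have : c j = 0 := by
      rw [← (hiter r).2, hφc]
      rfl
    exact hcj this
  have hrankS : Module.finrank 𝕜 (Submodule.span 𝕜 (Set.range g)) = Fintype.card T :=
    finrank_span_eq_card hli
  have hfinal : Submodule.span 𝕜 (Set.range g) = K :=
    Submodule.eq_of_le_of_finrank_le hSK (by rw [hrankS]; exact hrankK)
  rw [hgen, hfinal]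
  rfl
end

section
/- Let W ⊆ V be two algebraic gradients on the same based chain complex, with associated flows Ψ and Φ respectively. Then every Φ-invariant chain is also Ψ-invariant: C_*^Φ ⊆ C_*^Ψ. -/
open Classical Finset

/-- If `F_V x = 0` then `F_W x = 0` for `W ⊆ V`. -/
lemma Fmap_sub_zero {𝕜 : Type} [Field 𝕜] {l : ℕ} (C : BasedChainComplex 𝕜 l)
    (V W : Finset (Fin l × Fin l)) (hV : C.IsAlgGradient V) (hWV : W ⊆ V)
    (x : Fin l → 𝕜) (hx : C.Fmap V x = 0) : C.Fmap W x = 0 := by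
  obtain ⟨hfac, hdisj, -⟩ := hV
  funext j
  show (∑ i, (if (i, j) ∈ W then -(C.D i j)⁻¹ else 0) * x i) = 0
  refine Finset.sum_eq_zero fun i _ => ?_
  by_cases hiW : (i, j) ∈ W
  · have hiV : (i, j) ∈ V := hWV hiW
    have hxj : C.Fmap V x j = 0 := by rw [hx]; rfl
    have hsum : C.Fmap V x j = (-(C.D i j)⁻¹) * x i := by
      show (∑ i', (if (i', j) ∈ V then -(C.D i' j)⁻¹ else 0) * x i') = _
      rw [Finset.sum_eq_single i]
      · simp [hiV]
      · intro b _ hb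
        by_cases hbV : (b, j) ∈ V
        · exact absurd rfl (hdisj _ hbV _ hiV (by simp [Prod.ext_iff, hb])).2.2.2
        · simp [hbV]
      · intro h; exact absurd (Finset.mem_univ i) h
    have hD : C.D i j ≠ 0 := hfac _ hiV
    have : x i = 0 := by
      have h := hsum ▸ hxj
      rcases mul_eq_zero.mp h with h' | h'
      · exact absurd h' (by simp [hD])
      · exact h'
    simp [this]
  · simp [hiW]

/-- If `W ⊆ V` are two algebraic gradients with flows `Ψ` and `Φ`, then every
`Φ`-invariant chain is also `Ψ`-invariant: `C_*^Φ ⊆ C_*^Ψ`. -/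
theorem stmt9 {𝕜 : Type} [Field 𝕜] {l : ℕ} (C : BasedChainComplex 𝕜 l)
    (V W : Finset (Fin l × Fin l)) (hV : C.IsAlgGradient V) (hW : C.IsAlgGradient W)
    (hWV : W ⊆ V) (c : Fin l → 𝕜) (hc : C.flow V c = c) :
    C.flow W c = c := by
  set d := C.Fmap V c with hd_def
  set e := C.Fmap V (C.D.mulVec c) with he_def
  have key : C.D.mulVec d + e = 0 := by
    have h := hc
    unfold BasedChainComplex.flow at h
    have : c + (C.D.mulVec d + e) = c + 0 := by
      rw [add_zero, ← add_assoc]; exact h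
    exact add_left_cancel this
  obtain ⟨hfac, hdisj, f, hmono, hiff⟩ := hV
  have hVgrad : C.IsAlgGradient V := ⟨hfac, hdisj, f, hmono, hiff⟩
  have hd : d = 0 := by
    by_contra hd0
    -- S : pairs in V whose cofacet carries a nonzero coefficient of d
    set S := V.filter (fun p => d p.2 ≠ 0) with hS_def
    have hS : S.Nonempty := by
      obtain ⟨j, hj⟩ := Function.ne_iff.mp hd0
      have hj' : d j ≠ 0 := by simpa using hj
      have hsum : (∑ i, (if (i, j) ∈ V then -(C.D i j)⁻¹ else 0) * c i) ≠ 0 := hj'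
      obtain ⟨i, -, hi⟩ := Finset.exists_ne_zero_of_sum_ne_zero hsum
      have hiV : (i, j) ∈ V := by
        by_contra h; simp [h] at hi
      exact ⟨(i, j), Finset.mem_filter.mpr ⟨hiV, hj'⟩⟩
    obtain ⟨p, hpS, hpmax⟩ := S.exists_max_image (fun p => f p.1) hS
    have hpV : p ∈ V := (Finset.mem_filter.mp hpS).1
    have hdp : d p.2 ≠ 0 := (Finset.mem_filter.mp hpS).2
    have hDp : C.D p.1 p.2 ≠ 0 := hfac _ hpV
    -- Claim B : e p.1 = 0
    have hB : e p.1 = 0 := by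
      show (∑ i, (if (i, p.1) ∈ V then -(C.D i p.1)⁻¹ else 0) * (C.D.mulVec c) i) = 0
      refine Finset.sum_eq_zero fun i _ => ?_
      by_cases hiV : (i, p.1) ∈ V
      · exfalso
        by_cases hq : (i, p.1) = p
        · have h12 : p.1 < p.2 := C.filt _ _ hDp
          exact ne_of_lt h12 (congrArg Prod.snd hq)
        · exact (hdisj _ hiV _ hpV hq).2.2.1 rfl
      · simp [hiV]
    -- Claim A : (D.mulVec d) p.1 ≠ 0
    have hA : C.D.mulVec d p.1 ≠ 0 := by
      have hsum : C.D.mulVec d p.1 = C.D p.1 p.2 * d p.2 := by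
        show (∑ j, C.D p.1 j * d j) = _
        refine Finset.sum_eq_single p.2 (fun j _ hj => ?_) (fun h => absurd (Finset.mem_univ p.2) h)
        by_contra hne
        have hDj : C.D p.1 j ≠ 0 := fun h => hne (by simp [h])
        have hdj : d j ≠ 0 := fun h => hne (by simp [h])
        -- find the pair of V containing j
        have hsum' : (∑ i, (if (i, j) ∈ V then -(C.D i j)⁻¹ else 0) * c i) ≠ 0 := hdj
        obtain ⟨i, -, hi⟩ := Finset.exists_ne_zero_of_sum_ne_zero hsum'
        have hiV : (i, j) ∈ V := by
          by_contra h; simp [h] at hi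
        have hqS : (i, j) ∈ S := Finset.mem_filter.mpr ⟨hiV, hdj⟩
        have hqp : (i, j) ≠ p := fun h => hj (by rw [← h])
        have hip : i ≠ p.1 := fun h => (hdisj _ hiV _ hpV hqp).1 h
        have hle : f p.1 ≤ f j := hmono _ _ hDj
        have hlt : f p.1 < f j := by
          rcases lt_or_eq_of_le hle with h | h
          · exact h
          · exfalso
            have hpjV : (p.1, j) ∈ V := (hiff _ _ hDj).mp h
            by_cases hq2 : (p.1, j) = (i, j)
            · exact hip ((Prod.ext_iff.mp hq2).1).symm
            · exact (hdisj _ hpjV _ hiV hq2).2.2.2 rfl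
        have hfi : f i = f j := (hiff _ _ (hfac _ hiV)).mpr hiV
        have : f i ≤ f p.1 := hpmax _ hqS
        linarith
      rw [hsum]
      exact mul_ne_zero hDp hdp
    have : C.D.mulVec d p.1 + e p.1 = 0 := by
      have := congrFun key p.1; simpa using this
    rw [hB, add_zero] at this
    exact hA this
  have he : e = 0 := by
    rw [hd] at key
    simpa using key
  have hWc : C.Fmap W c = 0 := Fmap_sub_zero C V W hVgrad hWV c hd
  have hWdc : C.Fmap W (C.D.mulVec c) = 0 :=
    Fmap_sub_zero C V W hVgrad hWV (C.D.mulVec c) he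
  unfold BasedChainComplex.flow
  rw [hWc, hWdc, Matrix.mulVec_zero]
  simp
end

section
/- Let V be an algebraic gradient with flow Φ on a based chain complex. A chain c is Φ-invariant if and only if c is invariant under the single-pair flow Φ^{(a,b)} for every pair (a,b) ∈ V. -/
open Classical Finset

section Aux
open Finset
variable {𝕜 : Type} [Field 𝕜] {l : ℕ}

noncomputable def BasedChainComplex.lam (C : BasedChainComplex 𝕜 l) (c : Fin l → 𝕜)
    (p : Fin l × Fin l) : 𝕜 := -(C.D p.1 p.2)⁻¹ * c p.1

noncomputable def BasedChainComplex.mu (C : BasedChainComplex 𝕜 l) (c : Fin l → 𝕜)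
    (p : Fin l × Fin l) : 𝕜 := -(C.D p.1 p.2)⁻¹ * (C.D.mulVec c) p.1

lemma BasedChainComplex.Fmap_apply (C : BasedChainComplex 𝕜 l) (V : Finset (Fin l × Fin l))
    (c : Fin l → 𝕜) (j : Fin l) :
    C.Fmap V c j = ∑ p ∈ V, (if j = p.2 then -(C.D p.1 p.2)⁻¹ * c p.1 else 0) := by
  unfold BasedChainComplex.Fmap
  have h1 : ∀ i : Fin l, (if (i, j) ∈ V then -(C.D i j)⁻¹ else 0) * c i
      = ∑ p ∈ V, (if (i, j) = p then -(C.D p.1 p.2)⁻¹ * c p.1 else 0) := by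
    intro i
    rw [Finset.sum_ite_eq V (i, j) (fun p => -(C.D p.1 p.2)⁻¹ * c p.1)]
    split_ifs <;> simp
  simp only [h1]
  rw [Finset.sum_comm]
  refine Finset.sum_congr rfl fun p _ => ?_
  by_cases hj : j = p.2
  · subst hj
    rw [Finset.sum_eq_single p.1]
    · simp
    · intro i _ hi
      rw [if_neg]
      simp [Prod.ext_iff]
      intro h; exact absurd h hi
    · simp
  · rw [if_neg hj]
    apply Finset.sum_eq_zero
    intro i _
    rw [if_neg]
    simp [Prod.ext_iff]
    intro _; exact hj

lemma BasedChainComplex.flow_apply (C : BasedChainComplex 𝕜 l) (V : Finset (Fin l × Fin l))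
    (c : Fin l → 𝕜) (j : Fin l) :
    C.flow V c j = c j + ∑ p ∈ V,
      (C.lam c p * C.D j p.2 + (if j = p.2 then C.mu c p else 0)) := by
  unfold BasedChainComplex.flow
  have h2 : C.D.mulVec (C.Fmap V c) j = ∑ p ∈ V, C.lam c p * C.D j p.2 := by
    unfold Matrix.mulVec dotProduct
    simp only [BasedChainComplex.Fmap_apply, Finset.mul_sum]
    rw [Finset.sum_comm]
    refine Finset.sum_congr rfl fun p _ => ?_
    rw [Finset.sum_eq_single p.2]
    · simp [BasedChainComplex.lam]; ring
    · intro k _ hk; rw [if_neg hk, mul_zero]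
    · simp
  have h3 : C.Fmap V (C.D.mulVec c) j = ∑ p ∈ V, (if j = p.2 then C.mu c p else 0) := by
    rw [BasedChainComplex.Fmap_apply]
    exact Finset.sum_congr rfl fun p _ => by unfold BasedChainComplex.mu; split_ifs <;> rfl
  simp [h2, h3, Finset.sum_add_distrib]
  ring

end Aux

/-- A chain is invariant under the flow `Φ` of an algebraic gradient `V` if and only if it
is invariant under the single-pair flow `Φ^{(a,b)}` for every pair `(a, b) ∈ V`. -/
theorem stmt10 {𝕜 : Type} [Field 𝕜] {l : ℕ} (C : BasedChainComplex 𝕜 l)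
    (V : Finset (Fin l × Fin l)) (hV : C.IsAlgGradient V) (c : Fin l → 𝕜) :
    C.flow V c = c ↔ ∀ p ∈ V, C.flow {p} c = c := by
  obtain ⟨hfacet, hdisj, f, hmono, heq⟩ := hV
  have hsingle : ∀ p : Fin l × Fin l, ∀ j,
      C.flow {p} c j = c j + (C.lam c p * C.D j p.2 + (if j = p.2 then C.mu c p else 0)) := by
    intro p j
    rw [C.flow_apply {p} c j, Finset.sum_singleton]
  constructor
  · intro h p₀ hp₀
    -- from h: for all j, the sum of the per-pair terms is 0
    have hsum : ∀ j, ∑ p ∈ V,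
        (C.lam c p * C.D j p.2 + (if j = p.2 then C.mu c p else 0)) = 0 := by
      intro j
      have h0 := congrFun h j
      rw [C.flow_apply V c j] at h0
      have h1 : c j + ∑ p ∈ V,
          (C.lam c p * C.D j p.2 + (if j = p.2 then C.mu c p else 0)) = c j + 0 := by
        rw [add_zero]; exact h0
      exact add_left_cancel h1
    -- Step 1: all lam vanish
    have hlam : ∀ p ∈ V, C.lam c p = 0 := by
      by_contra hcon
      push_neg at hcon
      obtain ⟨p, hpV, hp0⟩ := hcon
      set S := V.filter (fun q => C.lam c q ≠ 0) with hS
      have hSne : S.Nonempty := ⟨p, Finset.mem_filter.mpr ⟨hpV, hp0⟩⟩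
      obtain ⟨q, hqS, hqmax⟩ := S.exists_max_image (fun q => f q.2) hSne
      have hqV : q ∈ V := (Finset.mem_filter.mp hqS).1
      have hqlam : C.lam c q ≠ 0 := (Finset.mem_filter.mp hqS).2
      have hkey := hsum q.1
      have hfq : C.IsFacet q.1 q.2 := hfacet q hqV
      have hfqq : f q.1 = f q.2 := (heq q.1 q.2 hfq).mpr (by simpa using hqV)
      -- all terms other than q vanish
      have hz : ∀ r ∈ V, r ≠ q →
          C.lam c r * C.D q.1 r.2 + (if q.1 = r.2 then C.mu c r else 0) = 0 := by
        intro r hrV hrq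
        have hd := hdisj q hqV r hrV (Ne.symm hrq)
        rw [if_neg hd.2.1]
        rw [add_zero]
        by_cases hl : C.lam c r = 0
        · rw [hl, zero_mul]
        · by_cases hD : C.D q.1 r.2 = 0
          · rw [hD, mul_zero]
          · exfalso
            have hfr : C.IsFacet q.1 r.2 := hD
            have h1 : f q.1 ≤ f r.2 := hmono _ _ hfr
            have h2 : f r.2 ≤ f q.2 := hqmax r (Finset.mem_filter.mpr ⟨hrV, hl⟩)
            have h3 : f q.1 = f r.2 := le_antisymm h1 (h2.trans hfqq.ge)
            have hmem : (q.1, r.2) ∈ V := (heq q.1 r.2 hfr).mp h3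
            have hne : q ≠ (q.1, r.2) := by
              intro hcontra
              have : q.2 = r.2 := by rw [hcontra]
              exact hd.2.2.2 this
            exact (hdisj q hqV (q.1, r.2) hmem hne).1 rfl
      rw [Finset.sum_eq_single q] at hkey
      · rw [if_neg (fun h => (C.filt q.1 q.2 hfq).ne (by rw [h])) , add_zero] at hkey
        exact hqlam (by
          rcases mul_eq_zero.mp hkey with h | h
          · exact h
          · exact absurd h hfq)
      · intro r hrV hrq; exact hz r hrV hrq
      · intro hq; exact absurd hqV hq
    -- Step 2: all mu vanish
    have hmu : ∀ p ∈ V, C.mu c p = 0 := by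
      intro q hqV
      have hkey := hsum q.2
      rw [Finset.sum_eq_single q] at hkey
      · rw [hlam q hqV, zero_mul, zero_add, if_pos rfl] at hkey
        exact hkey
      · intro r hrV hrq
        rw [hlam r hrV, zero_mul, zero_add, if_neg (hdisj q hqV r hrV (Ne.symm hrq)).2.2.2]
      · intro hq; exact absurd hqV hq
    funext j
    rw [hsingle p₀ j, hlam p₀ hp₀, hmu p₀ hp₀, zero_mul, ite_self, add_zero, add_zero]
  · intro h
    funext j
    rw [C.flow_apply V c j]
    have : ∀ p ∈ V, C.lam c p * C.D j p.2 + (if j = p.2 then C.mu c p else 0) = 0 := by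
      intro p hp
      have := congrFun (h p hp) j
      rw [hsingle p j] at this
      have h1 : c j + (C.lam c p * C.D j p.2 + (if j = p.2 then C.mu c p else 0))
          = c j + 0 := by rw [add_zero]; exact this
      exact add_left_cancel h1
    rw [Finset.sum_eq_zero this, add_zero]
end

section
/- Let V be an algebraic gradient with flow Φ on a based chain complex. A cycle z ∈ Z_n is Φ-invariant if and only if its support contains no gradient facets of V. Moreover, if z' is a Φ-invariant cycle that is V-homologous to z, then z = z'. -/
open Classical Finset

/-- Key lemma: a nonzero linear combination of the gradient cofacet boundary columns
has a nonzero entry at some gradient facet. -/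
lemma key_lemma {𝕜 : Type} [Field 𝕜] {l : ℕ} (C : BasedChainComplex 𝕜 l)
    (V : Finset (Fin l × Fin l)) (hV : C.IsAlgGradient V)
    (c : Fin l × Fin l → 𝕜) (p : Fin l × Fin l) (hp : p ∈ V) (hc : c p ≠ 0) :
    ∃ q ∈ V, (∑ r ∈ V, c r * C.D q.1 r.2) ≠ 0 := by
  obtain ⟨hfacet, hdisj, f, hf1, hf2⟩ := hV
  have hS : (V.filter (fun q => c q ≠ 0)).Nonempty :=
    ⟨p, Finset.mem_filter.2 ⟨hp, hc⟩⟩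
  obtain ⟨q, hqS, hqmax⟩ := Finset.exists_max_image _ (fun q => f q.1) hS
  obtain ⟨hqV, hcq⟩ := Finset.mem_filter.1 hqS
  refine ⟨q, hqV, ?_⟩
  have hsum : (∑ r ∈ V, c r * C.D q.1 r.2) = c q * C.D q.1 q.2 := by
    refine Finset.sum_eq_single q ?_ (fun h => absurd hqV h)
    intro r hrV hrq
    by_cases hcr : c r = 0
    · simp [hcr]
    by_cases hD : C.D q.1 r.2 = 0
    · simp [hD]
    exfalso
    -- q.1 is a facet of r.2
    have hfr : C.IsFacet r.1 r.2 := hfacet r hrV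
    have h1 : f q.1 ≤ f r.2 := hf1 _ _ hD
    have h2 : f r.1 = f r.2 := (hf2 _ _ hfr).2 hrV
    have h3 : f r.1 ≤ f q.1 := hqmax r (Finset.mem_filter.2 ⟨hrV, hcr⟩)
    have heq : f q.1 = f r.2 := le_antisymm h1 (h2 ▸ h3)
    have hmem : (q.1, r.2) ∈ V := (hf2 _ _ hD).1 heq
    -- disjointness forces (q.1, r.2) = q, hence r.2 = q.2
    have hr2 : r.2 = q.2 := by
      by_contra hne
      have := hdisj q hqV (q.1, r.2) hmem (by
        intro h; exact hne (congrArg Prod.snd h).symm)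
      exact this.1 rfl
    have := hdisj q hqV r hrV (Ne.symm hrq)
    exact this.2.2.2 hr2.symm
  rw [hsum]
  exact mul_ne_zero hcq (hfacet q hqV)

/-- `∂ F(z)` is the linear combination of gradient cofacet boundary columns with
coefficients `-(∂τ)⁻¹·z`. -/
lemma mulVec_Fmap {𝕜 : Type} [Field 𝕜] {l : ℕ} (C : BasedChainComplex 𝕜 l)
    (V : Finset (Fin l × Fin l)) (z : Fin l → 𝕜) :
    C.D.mulVec (C.Fmap V z) =
      fun i => ∑ q ∈ V, (-(C.D q.1 q.2)⁻¹ * z q.1) * C.D i q.2 := by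
  funext i
  simp only [Matrix.mulVec, BasedChainComplex.Fmap, dotProduct, Finset.mul_sum,
    mul_ite, ite_mul, mul_zero, zero_mul]
  rw [Finset.sum_comm]
  rw [← Finset.sum_product']
  rw [Finset.univ_product_univ]
  rw [Finset.sum_ite_mem, Finset.univ_inter]
  exact Finset.sum_congr rfl (fun q _ => by ring)

/-- A cycle `z ∈ Z_n` is `Φ`-invariant if and only if its support contains no gradient
facets of `V`.  Moreover, a `Φ`-invariant cycle that is `V`-homologous to a `Φ`-invariant
cycle `z` equals `z`. -/
theorem stmt11 {𝕜 : Type} [Field 𝕜] {l : ℕ} (C : BasedChainComplex 𝕜 l)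
    (V : Finset (Fin l × Fin l)) (hV : C.IsAlgGradient V)
    (n : ℕ) (z : Fin l → 𝕜) (hz : C.IsCycle n z) :
    (C.flow V z = z ↔ ∀ p ∈ V, z p.1 = 0) ∧
    (∀ z' : Fin l → 𝕜, C.IsCycle n z' → C.flow V z = z → C.flow V z' = z' →
      z - z' ∈ Submodule.span 𝕜
        {x : Fin l → 𝕜 | ∃ p ∈ V, C.deg p.1 = n ∧ x = fun i => C.D i p.2} →
      z = z') := by
  -- Fmap of 0 is 0
  have hF0 : C.Fmap V 0 = 0 := by
    funext j
    simp [BasedChainComplex.Fmap]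
  -- The main characterization, proved for any cycle.
  have main : ∀ w : Fin l → 𝕜, C.D.mulVec w = 0 →
      (C.flow V w = w ↔ ∀ p ∈ V, w p.1 = 0) := by
    intro w hw
    have hflow : C.flow V w = w + C.D.mulVec (C.Fmap V w) := by
      simp [BasedChainComplex.flow, hw, hF0]
    constructor
    · intro hfix p hpV
      have hDF : C.D.mulVec (C.Fmap V w) = 0 := by
        have := hflow ▸ hfix
        have h := left_eq_add.1 this.symm
        exact h
      by_contra hwp
      obtain ⟨q, hqV, hq⟩ := key_lemma C V hV
        (fun r => -(C.D r.1 r.2)⁻¹ * w r.1) p hpV (by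
          refine mul_ne_zero ?_ hwp
          have := hV.1 p hpV
          simp [BasedChainComplex.IsFacet] at this
          simpa using inv_ne_zero this)
      apply hq
      have := congrFun (mulVec_Fmap C V w) q.1
      rw [hDF] at this
      exact this.symm.trans (Pi.zero_apply q.1)
    · intro hsupp
      have hFz : C.Fmap V w = 0 := by
        funext j
        apply Finset.sum_eq_zero
        intro i _
        by_cases h : (i, j) ∈ V
        · simp [h, hsupp (i, j) h]
        · simp [h]
      simp [hflow, hFz]
  constructor
  · exact main z hz.1
  · intro z' hz' hfz hfz' hspan
    have hzsupp : ∀ p ∈ V, z p.1 = 0 := (main z hz.1).1 hfz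
    have hz'supp : ∀ p ∈ V, z' p.1 = 0 := (main z' hz'.1).1 hfz'
    set w := z - z' with hwdef
    have hwsupp : ∀ p ∈ V, w p.1 = 0 := by
      intro p hpV
      simp [hwdef, hzsupp p hpV, hz'supp p hpV]
    -- rewrite the span set as an image
    have hset : {x : Fin l → 𝕜 | ∃ p ∈ V, C.deg p.1 = n ∧ x = fun i => C.D i p.2} =
        (fun p : Fin l × Fin l => (fun i => C.D i p.2)) ''
          {p : Fin l × Fin l | p ∈ V ∧ C.deg p.1 = n} := by
      ext x
      constructor
      · rintro ⟨p, hpV, hdeg, rfl⟩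
        exact ⟨p, ⟨hpV, hdeg⟩, rfl⟩
      · rintro ⟨p, ⟨hpV, hdeg⟩, rfl⟩
        exact ⟨p, hpV, hdeg, rfl⟩
    rw [hset] at hspan
    obtain ⟨cf, hcfsupp, hcf⟩ := (Finsupp.mem_span_image_iff_linearCombination (R := 𝕜)).1 hspan
    -- w as a sum over V
    have hw : ∀ i, w i = ∑ q ∈ V, cf q * C.D i q.2 := by
      intro i
      have : w i = ∑ q ∈ cf.support, cf q * C.D i q.2 := by
        rw [← hcf]
        simp [Finsupp.linearCombination, Finsupp.sum]
      rw [this]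
      refine Finset.sum_subset ?_ ?_
      · intro q hq
        exact ((Finsupp.mem_supported 𝕜 cf).1 hcfsupp hq).1
      · intro q _ hq
        simp [Finsupp.notMem_support_iff.1 hq]
    have hcf0 : cf = 0 := by
      by_contra hne
      obtain ⟨p, hp⟩ := Finsupp.ne_iff.1 hne
      have hpV : p ∈ V := ((Finsupp.mem_supported 𝕜 cf).1 hcfsupp (Finsupp.mem_support_iff.2 (by simpa using hp))).1
      obtain ⟨q, hqV, hq⟩ := key_lemma C V hV (fun r => cf r) p hpV (by simpa using hp)
      exact hq (by rw [← hw q.1]; exact hwsupp q hqV)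
    have hw0 : w = 0 := by
      funext i
      rw [hw i]
      simp [hcf0]
    exact sub_eq_zero.1 hw0
end

section
/- Let V be an algebraic gradient on a based chain complex with elementwise filtration refining the sublevel-set filtration of the algebraic Morse function of V. Then the set of gradient cofacet boundaries {∂b : (a,b) ∈ V, a ∈ Σ_n} is linearly independent, and the canonical projection onto the span of the gradient facets of degree n (with respect to the basis Σ_n) is an isomorphism onto its image space. -/
open Classical Finset

/-!
If `(a, b) ∈ V` and `a < i` for a facet `i` of `b`, then `f a ≤ f i ≤ f b = f a`, so `(i, b) ∈ V`,
contradicting the disjointness of the pairs of `V`. Hence the boundaries `∂b` have pairwise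
distinct pivots `a`, i.e. they are triangular with nonzero diagonal, and they remain so after
restricting to the gradient facets, since the pivots are themselves gradient facets. This gives
linear independence of both the boundaries and their projections, so the projection is injective
on their span. The projections are supported on degree-`n` gradient facets, and a dimension count
shows that they span all of `Gf_n`.
-/

section Pivots

variable {R κ ι : Type*}

variable (R) in
def coordProj [Semiring R] (s : Set κ) [DecidablePred (· ∈ s)] :
    (κ → R) →ₗ[R] κ → R where
  toFun c i := if i ∈ s then c i else 0
  map_add' x y := by ext i; by_cases hi : i ∈ s <;> simp [hi]
  map_smul' r x := by ext i; by_cases hi : i ∈ s <;> simp [hi]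

theorem coordProj_apply_ne_zero [Semiring R] {s : Set κ} [DecidablePred (· ∈ s)] {c : κ → R}
    {i : κ} : coordProj R s c i ≠ 0 ↔ i ∈ s ∧ c i ≠ 0 :=
  ite_ne_right_iff

variable [LinearOrder κ]

structure HasDistinctPivots [Zero R] (u : ι → κ → R) (a : ι → κ) : Prop where
  injective : Function.Injective a
  apply_ne_zero : ∀ i, u i (a i) ≠ 0
  le_of_apply_ne_zero : ∀ i k, u i k ≠ 0 → k ≤ a i

variable {u : ι → κ → R} {a : ι → κ}

theorem HasDistinctPivots.coordProj [Semiring R] (h : HasDistinctPivots u a) {s : Set κ}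
    [DecidablePred (· ∈ s)] (hs : ∀ i, a i ∈ s) :
    HasDistinctPivots (fun i => coordProj R s (u i)) a where
  injective := h.injective
  apply_ne_zero i := coordProj_apply_ne_zero.2 ⟨hs i, h.apply_ne_zero i⟩
  le_of_apply_ne_zero i k hk := h.le_of_apply_ne_zero i k (coordProj_apply_ne_zero.1 hk).2

theorem HasDistinctPivots.linearIndependent [Ring R] [NoZeroDivisors R]
    (h : HasDistinctPivots u a) : LinearIndependent R u := by
  rw [linearIndependent_iff']
  intro s g hsum i hi
  by_contra hgi
  obtain ⟨j, hj, hmax⟩ := (s.filter (g · ≠ 0)).exists_max_image a ⟨i, mem_filter.2 ⟨hi, hgi⟩⟩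
  rw [mem_filter] at hj
  -- only the summand with the largest pivot contributes at the coordinate `a j`
  have hcoord : (∑ k ∈ s, g k • u k) (a j) = g j * u j (a j) := by
    rw [Finset.sum_apply, Finset.sum_eq_single_of_mem j hj.1]
    · rfl
    intro k hk hkj
    by_cases hgk : g k = 0
    · simp [hgk]
    have hle : a k ≤ a j := hmax k (mem_filter.2 ⟨hk, hgk⟩)
    by_contra hne
    exact hkj (h.injective (hle.antisymm
      (h.le_of_apply_ne_zero k _ (right_ne_zero_of_mul (a := g k) hne))))
  rw [hsum] at hcoord
  exact mul_ne_zero hj.2 (h.apply_ne_zero j) hcoord.symm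

end Pivots

section LinearAlgebra

variable {K M M' ι : Type*}

theorem injOn_span_of_linearIndependent_comp [Ring K] [AddCommGroup M] [Module K M]
    [AddCommGroup M'] [Module K M'] {v : ι → M} (f : M →ₗ[K] M')
    (h : LinearIndependent K (f ∘ v)) : Set.InjOn f (Submodule.span K (Set.range v)) := by
  rw [← Finsupp.range_linearCombination]
  rintro _ ⟨c, rfl⟩ _ ⟨d, rfl⟩ hcd
  have : Finsupp.linearCombination K (f ∘ v) c = Finsupp.linearCombination K (f ∘ v) d := by
    simpa [Finsupp.linearCombination_linear_comp] using hcd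
  rw [h this]

theorem span_range_eq_of_linearIndependent_of_le [DivisionRing K] [AddCommGroup M] [Module K M]
    [Fintype ι] {w s : ι → M} (hw : LinearIndependent K w)
    (hle : Submodule.span K (Set.range w) ≤ Submodule.span K (Set.range s)) :
    Submodule.span K (Set.range w) = Submodule.span K (Set.range s) := by
  have := FiniteDimensional.span_of_finite K (Set.finite_range s)
  exact Submodule.eq_of_le_of_finrank_le hle
    ((finrank_range_le_card s).trans (finrank_span_eq_card hw).ge)

theorem Pi.mem_span_of_single_mem [Semiring K] [Fintype ι] [DecidableEq ι]
    {S : Submodule K (ι → K)} {c : ι → K} (h : ∀ i, c i ≠ 0 → Pi.single i 1 ∈ S) : c ∈ S := by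
  rw [pi_eq_sum_univ' c]
  refine S.sum_mem fun i _ => ?_
  by_cases hc : c i = 0
  · simp [hc]
  · exact S.smul_mem _ (h i hc)

end LinearAlgebra

theorem Finset.setOf_exists_mem_and_eq {α β : Type*} (V : Finset α) (Q : α → Prop) (g : α → β) :
    {x | ∃ p ∈ V, Q p ∧ x = g p} = Set.range (fun p : {p // p ∈ V ∧ Q p} => g p.1) := by
  ext x
  constructor
  · rintro ⟨p, hp, hq, rfl⟩
    exact ⟨⟨p, hp, hq⟩, rfl⟩
  · rintro ⟨⟨p, hp, hq⟩, rfl⟩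
    exact ⟨p, hp, hq, rfl⟩

namespace BasedChainComplex.IsAlgGradient

variable {𝕜 : Type} [Field 𝕜] {l : ℕ} {C : BasedChainComplex 𝕜 l} {V : Finset (Fin l × Fin l)}

theorem eq_of_fst_eq (hV : C.IsAlgGradient V) {p q : Fin l × Fin l} (hp : p ∈ V) (hq : q ∈ V)
    (h : p.1 = q.1) : p = q := by
  by_contra hpq
  exact (hV.2.1 p hp q hq hpq).1 h

theorem eq_of_snd_eq (hV : C.IsAlgGradient V) {p q : Fin l × Fin l} (hp : p ∈ V) (hq : q ∈ V)
    (h : p.2 = q.2) : p = q := by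
  by_contra hpq
  exact (hV.2.1 p hp q hq hpq).2.2.2 h

theorem le_fst_of_isFacet (hV : C.IsAlgGradient V) {f : Fin l → ℝ}
    (hmono : ∀ i j, C.IsFacet i j → f i ≤ f j)
    (heq : ∀ i j, C.IsFacet i j → (f i = f j ↔ (i, j) ∈ V))
    (hrefine : Monotone f) {p : Fin l × Fin l} (hp : p ∈ V) {i : Fin l}
    (hi : C.IsFacet i p.2) : i ≤ p.1 := by
  by_contra! hlt
  have hfp : f p.1 = f p.2 := (heq _ _ (hV.1 p hp)).2 hp
  have hfi : f i = f p.2 := (hmono i p.2 hi).antisymm (hfp ▸ hrefine hlt.le)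
  have hip : (i, p.2) ∈ V := (heq i p.2 hi).1 hfi
  exact hlt.ne (congrArg Prod.fst (hV.eq_of_snd_eq hp hip rfl))

theorem hasDistinctPivots (hV : C.IsAlgGradient V) {f : Fin l → ℝ}
    (hmono : ∀ i j, C.IsFacet i j → f i ≤ f j)
    (heq : ∀ i j, C.IsFacet i j → (f i = f j ↔ (i, j) ∈ V))
    (hrefine : Monotone f) (n : ℕ) :
    HasDistinctPivots
      (fun p : {p : Fin l × Fin l // p ∈ V ∧ C.deg p.1 = n} => fun i => C.D i p.1.2)
      (fun p => p.1.1) where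
  injective p q h := Subtype.ext (hV.eq_of_fst_eq p.2.1 q.2.1 h)
  apply_ne_zero p := hV.1 p.1 p.2.1
  le_of_apply_ne_zero p _ hi := hV.le_fst_of_isFacet hmono heq hrefine p.2.1 hi

theorem coordProj_boundary_mem_span (hV : C.IsAlgGradient V) {n : ℕ}
    (p : {p : Fin l × Fin l // p ∈ V ∧ C.deg p.1 = n}) :
    coordProj 𝕜 {i | ∃ b, (i, b) ∈ V} (fun i => C.D i p.1.2) ∈ Submodule.span 𝕜
      (Set.range fun q : {p : Fin l × Fin l // p ∈ V ∧ C.deg p.1 = n} => Pi.single q.1.1 1) := by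
  refine Pi.mem_span_of_single_mem fun i hi => ?_
  obtain ⟨⟨b, hb⟩, hD⟩ := coordProj_apply_ne_zero.1 hi
  have hdeg : C.deg i = n := by
    have := C.homog i p.1.2 hD
    have := C.homog p.1.1 p.1.2 (hV.1 p.1 p.2.1)
    have := p.2.2
    omega
  exact Submodule.subset_span ⟨⟨(i, b), hb, hdeg⟩, rfl⟩

end BasedChainComplex.IsAlgGradient

open Classical in
/-- For an algebraic gradient `V` of an algebraic Morse function `f` on a based chain
complex whose elementwise filtration refines the sublevel-set filtration of `f`
(`f` is monotone in the filtration order), the set of gradient cofacet boundaries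
`{∂b : (a,b) ∈ V, a ∈ Σ_n}` is linearly independent, and the canonical projection onto
the span of the degree-`n` gradient facets is an isomorphism onto it (injective on the
span of the gradient cofacet boundaries, with image the span of the gradient facets). -/
theorem stmt12 {𝕜 : Type} [Field 𝕜] {l : ℕ} (C : BasedChainComplex 𝕜 l)
    (V : Finset (Fin l × Fin l)) (hV : C.IsAlgGradient V)
    (f : Fin l → ℝ)
    (hmono : ∀ i j, C.IsFacet i j → f i ≤ f j)
    (heq : ∀ i j, C.IsFacet i j → (f i = f j ↔ (i, j) ∈ V))
    (hrefine : Monotone f) (n : ℕ) :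
    LinearIndependent 𝕜
      (fun p : {p : Fin l × Fin l // p ∈ V ∧ C.deg p.1 = n} =>
        (fun i => C.D i p.1.2 : Fin l → 𝕜)) ∧
    Set.InjOn (fun c : Fin l → 𝕜 => (fun i => if ∃ b, (i, b) ∈ V then c i else 0))
      ↑(Submodule.span 𝕜
        {x : Fin l → 𝕜 | ∃ p ∈ V, C.deg p.1 = n ∧ x = fun i => C.D i p.2}) ∧
    (fun c : Fin l → 𝕜 => (fun i => if ∃ b, (i, b) ∈ V then c i else 0)) ''
        ↑(Submodule.span 𝕜
          {x : Fin l → 𝕜 | ∃ p ∈ V, C.deg p.1 = n ∧ x = fun i => C.D i p.2}) =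
      ↑(Submodule.span 𝕜
        {x : Fin l → 𝕜 | ∃ p ∈ V, C.deg p.1 = n ∧ x = Pi.single p.1 (1 : 𝕜)}) := by
  set G : Set (Fin l) := {i | ∃ b, (i, b) ∈ V}
  have hpiv := hV.hasDistinctPivots hmono heq hrefine n
  have hproj := (hpiv.coordProj (s := G) fun p => ⟨p.1.2, p.2.1⟩).linearIndependent
  change _ ∧ Set.InjOn (coordProj 𝕜 G) _ ∧ coordProj 𝕜 G '' _ = _
  rw [Finset.setOf_exists_mem_and_eq, Finset.setOf_exists_mem_and_eq]
  refine ⟨hpiv.linearIndependent, injOn_span_of_linearIndependent_comp _ hproj, ?_⟩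
  rw [← Submodule.map_coe, Submodule.map_span, ← Set.range_comp]
  exact congrArg _ (span_range_eq_of_linearIndependent_of_le hproj
    (Submodule.span_le.2 (Set.range_subset_iff.2 hV.coordProj_boundary_mem_span)))
end

section
/- Let V be an n-reduced algebraic gradient on an elementwise-filtered based chain complex that generates the n-boundaries. Then a cycle z ∈ Z_n is reducible (i.e., not lexicographically minimal in its homology class) if and only if the support of z contains a gradient facet of V. -/
open Classical Finset

lemma lexlt_intro {α : Type*} [LinearOrder α] {A B : Finset α} {a : α}
    (haB : a ∈ B) (haA : a ∉ A) (hbd : ∀ i, ¬(i ∈ A ↔ i ∈ B) → i ≤ a) :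
    finsetLexLe A B ∧ A ≠ B := by
  refine ⟨?_, fun h => haA (h ▸ haB)⟩
  unfold finsetLexLe
  have hsym : a ∈ (A \ B) ∪ (B \ A) :=
    Finset.mem_union.2 (Or.inr (Finset.mem_sdiff.2 ⟨haB, haA⟩))
  have hne : ((A \ B) ∪ (B \ A)).Nonempty := ⟨a, hsym⟩
  have hbd' : ∀ i ∈ (A \ B) ∪ (B \ A), i ≤ a := by
    intro i hi
    apply hbd
    intro hiff
    rcases Finset.mem_union.1 hi with h | h
    · exact (Finset.mem_sdiff.1 h).2 (hiff.1 (Finset.mem_sdiff.1 h).1)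
    · exact (Finset.mem_sdiff.1 h).2 (hiff.2 (Finset.mem_sdiff.1 h).1)
  have hmax : ((A \ B) ∪ (B \ A)).max' hne = a :=
    le_antisymm (Finset.max'_le _ _ _ hbd') (Finset.le_max' _ _ hsym)
  exact Or.inr ⟨hne, by rw [hmax]; exact haB⟩

lemma lexlt_elim {α : Type*} [LinearOrder α] {A B : Finset α}
    (hle : finsetLexLe A B) (hne : A ≠ B) :
    ∃ m, m ∈ B ∧ m ∉ A ∧ ∀ i, ¬(i ∈ A ↔ i ∈ B) → i ≤ m := by
  unfold finsetLexLe at hle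
  rcases hle with heq | ⟨h, hm⟩
  · exact absurd heq hne
  refine ⟨_, hm, ?_, ?_⟩
  · intro hA
    have hmem := Finset.max'_mem _ h
    rcases Finset.mem_union.1 hmem with h' | h'
    · exact (Finset.mem_sdiff.1 h').2 hm
    · exact (Finset.mem_sdiff.1 h').2 hA
  · intro i hi
    have hmem : (i ∈ A ∧ i ∉ B) ∨ (i ∈ B ∧ i ∉ A) := by tauto
    refine Finset.le_max' _ _ ?_
    rcases hmem with ⟨h1, h2⟩ | ⟨h1, h2⟩
    · exact Finset.mem_union.2 (Or.inl (Finset.mem_sdiff.2 ⟨h1, h2⟩))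
    · exact Finset.mem_union.2 (Or.inr (Finset.mem_sdiff.2 ⟨h1, h2⟩))

/-- For an `n`-reduced algebraic gradient `V` generating the `n`-boundaries, a cycle
`z ∈ Z_n` is reducible (there is a strictly lexicographically smaller homologous cycle)
if and only if the support of `z` contains a gradient facet of `V`. -/
theorem stmt13 {𝕜 : Type} [Field 𝕜] {l : ℕ} (C : BasedChainComplex 𝕜 l)
    (V : Finset (Fin l × Fin l)) (hV : C.IsAlgGradient V)
    (n : ℕ) (hred : C.NReduced V n) (hgen : C.GeneratesBoundaries V n)
    (z : Fin l → 𝕜) (hz : C.IsCycle n z) :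
    (∃ e : Fin l → 𝕜, chainLexLt (z + C.D.mulVec e) z) ↔ ∃ p ∈ V, z p.1 ≠ 0 := by
  have mem_vsupp : ∀ (c : Fin l → 𝕜) (i : Fin l), i ∈ vsupp c ↔ c i ≠ 0 := by
    intro c i; simp [vsupp]
  have hdistinct : ∀ p ∈ V, ∀ q ∈ V, p ≠ q → p.1 ≠ q.1 :=
    fun p hp q hq h => (hV.2.1 p hp q hq h).1
  have hpiv_ne : ∀ p ∈ V, C.deg p.1 = n → C.D p.1 p.2 ≠ 0 := by
    intro p hp hd
    have h := hred p hp hd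
    have hm : p.1 ∈ vsupp (fun i => C.D i p.2) := Finset.mem_of_max h
    simpa [vsupp] using hm
  have hpiv_le : ∀ p ∈ V, C.deg p.1 = n → ∀ i, C.D i p.2 ≠ 0 → i ≤ p.1 := by
    intro p hp hd i hi
    have h := hred p hp hd
    have h2 : (i : WithBot (Fin l)) ≤ vpivot (fun i => C.D i p.2) :=
      Finset.le_max ((mem_vsupp _ i).2 hi)
    rw [h] at h2
    exact_mod_cast h2
  constructor
  · rintro ⟨e, hlt⟩
    obtain ⟨hle, hnsupp⟩ := hlt
    by_contra hno
    push_neg at hno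
    set w : Fin l → 𝕜 := C.D.mulVec e with hw
    set e' : Fin l → 𝕜 := fun j => if C.deg j = n + 1 then e j else 0 with he'
    set w' : Fin l → 𝕜 := C.D.mulVec e' with hw'
    have he'deg : ∀ j, e' j ≠ 0 → C.deg j = n + 1 := by
      intro j hj
      by_contra h
      simp [he', h] at hj
    have hww' : ∀ i, C.deg i = n → w i = w' i := by
      intro i hi
      simp only [hw, hw', Matrix.mulVec, dotProduct]
      refine Finset.sum_congr rfl fun j _ => ?_
      by_cases hD : C.D i j = 0
      · simp [hD]
      · have hdj : C.deg j = n + 1 := by rw [← C.homog i j hD, hi]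
        simp [he', hdj]
    have hspan := hgen e' he'deg
    have hset : {x : Fin l → 𝕜 | ∃ p ∈ V, C.deg p.1 = n ∧ x = fun i => C.D i p.2}
        = (fun p : Fin l × Fin l => fun i => C.D i p.2) ''
          {p : Fin l × Fin l | p ∈ V ∧ C.deg p.1 = n} := by
      ext x
      constructor
      · rintro ⟨p, hp, hd, rfl⟩; exact ⟨p, ⟨hp, hd⟩, rfl⟩
      · rintro ⟨p, ⟨hp, hd⟩, rfl⟩; exact ⟨p, hp, hd, rfl⟩
    rw [hset, Finsupp.mem_span_image_iff_linearCombination] at hspan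
    obtain ⟨c, hcsupp, hctot⟩ := hspan
    have hcset : ∀ q ∈ c.support, q ∈ V ∧ C.deg q.1 = n := by
      intro q hq
      exact (Finsupp.mem_supported 𝕜 c).1 hcsupp hq
    have hw'eval : ∀ i, w' i = ∑ q ∈ c.support, c q * C.D i q.2 := by
      intro i
      rw [hw', ← hctot, Finsupp.linearCombination_apply, Finsupp.sum]
      simp [Finset.sum_apply]
    obtain ⟨m, hmB, hmA, hbound⟩ := lexlt_elim hle hnsupp
    have hzm : z m ≠ 0 := (mem_vsupp z m).1 hmB
    have hdm : C.deg m = n := hz.2 m hzm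
    have hzwm : (z + w) m = 0 := by
      by_contra h
      exact hmA ((mem_vsupp _ m).2 h)
    have hw'm : w' m ≠ 0 := by
      rw [← hww' m hdm]
      intro h
      apply hzm
      have heval : (z + w) m = z m + w m := rfl
      rw [heval, h, add_zero] at hzwm
      exact hzwm
    rw [hw'eval] at hw'm
    obtain ⟨q0, hq0mem, hq0ne⟩ := Finset.exists_ne_zero_of_sum_ne_zero hw'm
    have hne2 : (c.support.image Prod.fst).Nonempty :=
      ⟨q0.1, Finset.mem_image_of_mem _ hq0mem⟩
    obtain ⟨p, hpmem, hpa⟩ := Finset.mem_image.1 (Finset.max'_mem _ hne2)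
    obtain ⟨hpV, hpd⟩ := hcset p hpmem
    have hw'a : w' p.1 ≠ 0 := by
      rw [hw'eval, Finset.sum_eq_single p]
      · exact mul_ne_zero (Finsupp.mem_support_iff.1 hpmem) (hpiv_ne p hpV hpd)
      · intro q hq hqp
        obtain ⟨hqV, hqd⟩ := hcset q hq
        have h1 : q.1 ≠ p.1 := hdistinct q hqV p hpV hqp
        have h2 : q.1 ≤ p.1 := by
          rw [hpa]; exact Finset.le_max' _ _ (Finset.mem_image_of_mem _ hq)
        have h3 : C.D p.1 q.2 = 0 := by
          by_contra hD
          exact h1 (le_antisymm h2 (hpiv_le q hqV hqd p.1 hD))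
        simp [h3]
      · intro h; exact absurd hpmem h
    have hza : z p.1 = 0 := hno p hpV
    have hzwa : (z + w) p.1 ≠ 0 := by
      have heval : (z + w) p.1 = z p.1 + w p.1 := rfl
      rw [heval, hza, zero_add, hww' p.1 hpd]
      exact hw'a
    have h4 : p.1 ≤ m := by
      apply hbound
      intro hiff
      exact (mem_vsupp z p.1).1 (hiff.1 ((mem_vsupp _ p.1).2 hzwa)) hza
    have hq0D : C.D m q0.2 ≠ 0 := fun h => hq0ne (by rw [h, mul_zero])
    obtain ⟨hq0V, hq0d⟩ := hcset q0 hq0mem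
    have h5 : m ≤ q0.1 := hpiv_le q0 hq0V hq0d m hq0D
    have h6 : q0.1 ≤ p.1 := by
      rw [hpa]; exact Finset.le_max' _ _ (Finset.mem_image_of_mem Prod.fst hq0mem)
    have hma : m = p.1 := le_antisymm (h5.trans h6) h4
    rw [hma] at hzm
    exact hzm hza
  · rintro ⟨p, hp, hzp⟩
    have hdeg : C.deg p.1 = n := hz.2 _ hzp
    have hDne := hpiv_ne p hp hdeg
    refine ⟨fun j => if j = p.2 then -(z p.1) / (C.D p.1 p.2) else 0, ?_⟩
    set e : Fin l → 𝕜 := fun j => if j = p.2 then -(z p.1) / (C.D p.1 p.2) else 0 with he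
    have hwe : ∀ i, C.D.mulVec e i = C.D i p.2 * (-(z p.1) / C.D p.1 p.2) := by
      intro i
      simp [he, Matrix.mulVec, dotProduct, mul_ite]
    have hzw0 : (z + C.D.mulVec e) p.1 = 0 := by
      have heval : (z + C.D.mulVec e) p.1 = z p.1 + C.D.mulVec e p.1 := rfl
      rw [heval, hwe]
      field_simp
      ring
    have hbound : ∀ i, (z + C.D.mulVec e) i ≠ z i → i ≤ p.1 := by
      intro i hi
      have hwne : C.D.mulVec e i ≠ 0 := by
        intro h
        apply hi
        show z i + C.D.mulVec e i = z i
        rw [h, add_zero]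
      rw [hwe] at hwne
      have hD : C.D i p.2 ≠ 0 := fun h => hwne (by rw [h, zero_mul])
      exact hpiv_le p hp hdeg i hD
    have hpB : p.1 ∈ vsupp z := (mem_vsupp _ _).2 hzp
    have hpA : p.1 ∉ vsupp (z + C.D.mulVec e) := fun h => ((mem_vsupp _ _).1 h) hzw0
    refine lexlt_intro hpB hpA ?_
    intro i hiff
    apply hbound i
    intro h
    apply hiff
    simp only [mem_vsupp, h]
end

section
/- Let V be an n-reduced algebraic gradient on an elementwise-filtered based chain complex that generates the n-boundaries, with flow Φ. Then a cycle z ∈ Z_n is lexicographically minimal in its homology class if and only if z is Φ-invariant. -/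
open Classical Finset

/-!
If `z` has a nonzero coefficient on the source `a` of a pair `(a, b) ∈ V`, then `∂F z` is a
combination of the columns `∂b` over such pairs, and by `n`-reducedness these columns are in
echelon form with pivots at their sources. At the largest such source the flow `Φ z = z + ∂F z`
cancels the coefficient of `z` while agreeing with `z` above it, so `Φ z` is lexicographically
smaller than `z`. Conversely, if `z` vanishes on all sources, a homologous `z + ∂e` that is
smaller must cancel a coefficient of `z`. Replacing `e` by its degree-`n+1` part keeps `∂e` in
degree `n`, and makes it a nonzero combination of the columns `∂b`; its pivot is then a source,
where `z` vanishes and `z + ∂e` does not.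
-/

open Matrix

section Echelon

variable {ι α R : Type*} [LinearOrder α] [Semiring R]

theorem exists_pivot_sum_smul {s : Finset ι} (hs : s.Nonempty) (g : ι → R) {v : ι → α → R}
    {a : ι → α} (ha : Set.InjOn a s) (hzero : ∀ q ∈ s, ∀ i, a q < i → v q i = 0) :
    ∃ p ∈ s, (∑ q ∈ s, g q • v q) (a p) = g p * v p (a p) ∧
      ∀ i, a p < i → (∑ q ∈ s, g q • v q) i = 0 := by
  obtain ⟨p, hp, hmax⟩ := s.exists_max_image a hs
  have hlt : ∀ q ∈ s, q ≠ p → a q < a p := fun q hq hne =>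
    (hmax q hq).lt_of_ne fun h => hne (ha hq hp h)
  refine ⟨p, hp, ?_, fun i hi => ?_⟩
  · rw [Finset.sum_apply, Finset.sum_eq_single p
      (fun q hq hne => by simp [hzero q hq _ (hlt q hq hne)]) (absurd hp)]
    rfl
  · rw [Finset.sum_apply]
    exact Finset.sum_eq_zero fun q hq => by simp [hzero q hq i ((hmax q hq).trans_lt hi)]

theorem exists_pivot_of_mem_span [NoZeroDivisors R] {s : Set ι} {v : ι → α → R} {a : ι → α}
    (ha : Set.InjOn a s) (hpiv : ∀ p ∈ s, v p (a p) ≠ 0)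
    (hzero : ∀ q ∈ s, ∀ i, a q < i → v q i = 0) {x : α → R}
    (hx : x ∈ Submodule.span R (v '' s)) (hx0 : x ≠ 0) :
    ∃ p ∈ s, x (a p) ≠ 0 ∧ ∀ i, a p < i → x i = 0 := by
  obtain ⟨c, hc, rfl⟩ := (Finsupp.mem_span_image_iff_linearCombination R).mp hx
  have hsub : (c.support : Set ι) ⊆ s := hc
  have hne : c.support.Nonempty :=
    Finsupp.support_nonempty_iff.mpr fun h => hx0 (by rw [h, map_zero])
  obtain ⟨p, hp, hval, habove⟩ := exists_pivot_sum_smul hne c (ha.mono hsub)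
    fun q hq => hzero q (hsub hq)
  rw [Finsupp.linearCombination_apply, Finsupp.sum]
  exact ⟨p, hsub hp, hval ▸ mul_ne_zero (Finsupp.mem_support_iff.mp hp) (hpiv p (hsub hp)),
    habove⟩

end Echelon

theorem finsetLexLe_and_ne_iff {α : Type*} [LinearOrder α] {A B : Finset α} :
    finsetLexLe A B ∧ A ≠ B ↔ ∃ a ∈ B, a ∉ A ∧ ∀ i, a < i → (i ∈ A ↔ i ∈ B) := by
  have hS : ∀ i, i ∈ (A \ B) ∪ (B \ A) ↔ ¬(i ∈ A ↔ i ∈ B) := fun i => by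
    simp only [mem_union, mem_sdiff]
    tauto
  constructor
  · rintro ⟨h | ⟨hne, hmax⟩, hAB⟩
    · exact absurd h hAB
    refine ⟨_, hmax, fun hA => (hS _).mp (max'_mem _ hne) (iff_of_true hA hmax), fun i hi => ?_⟩
    by_contra h
    exact not_le.mpr hi (le_max' _ i ((hS i).mpr h))
  · rintro ⟨a, haB, haA, habove⟩
    have haS : a ∈ (A \ B) ∪ (B \ A) := (hS a).mpr fun h => haA (h.mpr haB)
    have hmax : ((A \ B) ∪ (B \ A)).max' ⟨a, haS⟩ = a :=
      le_antisymm (max'_le _ _ _ fun i hi => not_lt.mp fun hlt => (hS i).mp hi (habove i hlt))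
        (le_max' _ a haS)
    exact ⟨Or.inr ⟨⟨a, haS⟩, by rw [hmax]; exact haB⟩, fun h => haA (h ▸ haB)⟩

section Chains

variable {𝕜 : Type} [Field 𝕜] {l : ℕ}

theorem mem_vsupp {c : Fin l → 𝕜} {i : Fin l} : i ∈ vsupp c ↔ c i ≠ 0 := by
  simp [vsupp]

theorem chainLexLt_iff {c₁ c₂ : Fin l → 𝕜} :
    chainLexLt c₁ c₂ ↔ ∃ a, c₂ a ≠ 0 ∧ c₁ a = 0 ∧ ∀ i, a < i → (c₁ i = 0 ↔ c₂ i = 0) := by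
  simp only [chainLexLt, chainLexLe, finsetLexLe_and_ne_iff, mem_vsupp, ne_eq, not_not,
    not_iff_not]

theorem apply_eq_zero_of_vpivot_eq_of_lt {c : Fin l → 𝕜} {a i : Fin l} (h : vpivot c = a)
    (hi : a < i) : c i = 0 := by
  by_contra hci
  exact not_le.mpr hi (WithBot.coe_le_coe.mp (h ▸ Finset.le_max (mem_vsupp.mpr hci)))

end Chains

namespace BasedChainComplex

variable {𝕜 : Type} [Field 𝕜] {l : ℕ} {C : BasedChainComplex 𝕜 l} {V : Finset (Fin l × Fin l)}
  {n : ℕ}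

theorem IsAlgGradient.injOn_fst (hV : C.IsAlgGradient V) :
    Set.InjOn Prod.fst (V : Set (Fin l × Fin l)) :=
  fun p hp q hq h => by_contra fun hne => (hV.2.1 p hp q hq hne).1 h

theorem NReduced.apply_eq_zero_of_lt (hred : C.NReduced V n) {p : Fin l × Fin l} (hp : p ∈ V)
    (hdeg : C.deg p.1 = n) {i : Fin l} (hi : p.1 < i) : C.D i p.2 = 0 :=
  apply_eq_zero_of_vpivot_eq_of_lt (c := fun i => C.D i p.2) (hred p hp hdeg) hi

theorem GeneratesBoundaries.exists_pivot (hgen : C.GeneratesBoundaries V n)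
    (hV : C.IsAlgGradient V) (hred : C.NReduced V n) {e : Fin l → 𝕜}
    (he : ∀ i, e i ≠ 0 → C.deg i = n + 1) (hne : C.D *ᵥ e ≠ 0) :
    ∃ p ∈ V, C.deg p.1 = n ∧ (C.D *ᵥ e) p.1 ≠ 0 ∧ ∀ i, p.1 < i → (C.D *ᵥ e) i = 0 := by
  have hset : {x : Fin l → 𝕜 | ∃ p ∈ V, C.deg p.1 = n ∧ x = fun i => C.D i p.2} =
      (fun p => fun i => C.D i p.2) '' {p | p ∈ V ∧ C.deg p.1 = n} := by
    ext x
    simp only [Set.mem_ofPred_eq, Set.mem_image, and_assoc, eq_comm]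
  have hspan := hgen e he
  rw [hset] at hspan
  obtain ⟨p, ⟨hp, hdeg⟩, hpiv⟩ :=
    exists_pivot_of_mem_span (v := fun (p : Fin l × Fin l) i => C.D i p.2)
      (hV.injOn_fst.mono fun p hp => hp.1) (fun p hp => hV.1 p hp.1)
      (fun q hq _ hi => hred.apply_eq_zero_of_lt hq.1 hq.2 hi) hspan hne
  exact ⟨p, hp, hdeg, hpiv⟩

def degreePart (C : BasedChainComplex 𝕜 l) (k : ℕ) (c : Fin l → 𝕜) : Fin l → 𝕜 :=
  fun j => if C.deg j = k then c j else 0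

theorem mulVec_degreePart_apply (c : Fin l → 𝕜) {i : Fin l} (hi : C.deg i = n) :
    (C.D *ᵥ C.degreePart (n + 1) c) i = (C.D *ᵥ c) i := by
  simp only [mulVec, dotProduct]
  refine Finset.sum_congr rfl fun j _ => ?_
  by_cases hD : C.D i j = 0
  · simp [hD]
  · simp [degreePart, ← C.homog i j hD, hi]

theorem Fmap_eq_zero (c : Fin l → 𝕜) (h : ∀ p ∈ V, c p.1 = 0) : C.Fmap V c = 0 := by
  funext j
  refine Finset.sum_eq_zero fun i _ => ?_
  by_cases hij : (i, j) ∈ V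
  · simp [h _ hij]
  · simp [hij]

theorem mulVec_Fmap (c : Fin l → 𝕜) :
    C.D *ᵥ C.Fmap V c = ∑ q ∈ V, (-(C.D q.1 q.2)⁻¹ * c q.1) • fun i => C.D i q.2 := by
  ext i
  simp only [mulVec, dotProduct, Fmap, Finset.sum_apply, Pi.smul_apply, smul_eq_mul,
    Finset.mul_sum]
  rw [Finset.sum_comm, ← Fintype.sum_prod_type', ← Finset.sum_subset (Finset.subset_univ V)]
  · refine Finset.sum_congr rfl fun q hq => ?_
    rw [if_pos hq]
    ring
  · intro q _ hq
    rw [if_neg hq]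
    ring

theorem flow_eq_add (c : Fin l → 𝕜) (hc : C.D *ᵥ c = 0) :
    C.flow V c = c + C.D *ᵥ C.Fmap V c := by
  rw [flow, hc, Fmap_eq_zero 0 fun _ _ => rfl, add_zero]

theorem chainLexLt_flow (hV : C.IsAlgGradient V) (hred : C.NReduced V n) {z : Fin l → 𝕜}
    (hz : C.IsCycle n z) (hsrc : ∃ p ∈ V, z p.1 ≠ 0) : chainLexLt (C.flow V z) z := by
  set s := V.filter fun q => z q.1 ≠ 0
  have hs : s.Nonempty := by
    obtain ⟨p, hp, hzp⟩ := hsrc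
    exact ⟨p, Finset.mem_filter.mpr ⟨hp, hzp⟩⟩
  have hflow : C.flow V z = z + ∑ q ∈ s, (-(C.D q.1 q.2)⁻¹ * z q.1) • fun i => C.D i q.2 := by
    rw [C.flow_eq_add z hz.1, mulVec_Fmap, Finset.sum_filter_of_ne]
    intro q _ hq hzq
    simp [hzq] at hq
  obtain ⟨p, hp, hval, habove⟩ := exists_pivot_sum_smul hs (fun q => -(C.D q.1 q.2)⁻¹ * z q.1)
    (hV.injOn_fst.mono (Finset.filter_subset _ V))
    fun q hq _ hi =>
      have hq' := Finset.mem_filter.mp hq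
      hred.apply_eq_zero_of_lt hq'.1 (hz.2 _ hq'.2) hi
  obtain ⟨hpV, hzp⟩ := Finset.mem_filter.mp hp
  rw [hflow]
  refine chainLexLt_iff.mpr ⟨p.1, hzp, ?_, fun i hi => ?_⟩
  · rw [Pi.add_apply, hval]
    have hD : C.D p.1 p.2 ≠ 0 := hV.1 p hpV
    field_simp
    ring
  · rw [Pi.add_apply, habove i hi, add_zero]

theorem lexMinimal_of_forall_eq_zero (hV : C.IsAlgGradient V) (hred : C.NReduced V n)
    (hgen : C.GeneratesBoundaries V n) {z : Fin l → 𝕜} (hz : C.IsCycle n z)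
    (h0 : ∀ p ∈ V, z p.1 = 0) : C.LexMinimal z := by
  intro e hlt
  obtain ⟨m, hzm, hm, hagree⟩ := chainLexLt_iff.mp hlt
  have hb : ∀ i, C.deg i = n → (C.D *ᵥ C.degreePart (n + 1) e) i = (C.D *ᵥ e) i :=
    fun i => mulVec_degreePart_apply e
  have hbm : (C.D *ᵥ C.degreePart (n + 1) e) m ≠ 0 := by
    rw [hb m (hz.2 m hzm), eq_neg_of_add_eq_zero_right hm]
    exact neg_ne_zero.mpr hzm
  obtain ⟨p, hp, hdp, hbp, habove⟩ := hgen.exists_pivot (e := C.degreePart (n + 1) e) hV hred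
    (fun i hi => by_contra fun h => hi (if_neg h)) fun h => hbm (by rw [h]; rfl)
  have hmp : m < p.1 :=
    lt_of_le_of_ne (not_lt.mp fun h => hbm (habove m h)) fun h => hzm (h ▸ h0 p hp)
  have hzep : (z + C.D *ᵥ e) p.1 = 0 := (hagree p.1 hmp).mpr (h0 p hp)
  rw [hb _ hdp] at hbp
  rw [Pi.add_apply, h0 p hp, zero_add] at hzep
  exact hbp hzep

end BasedChainComplex

/-- For an `n`-reduced algebraic gradient `V` generating the `n`-boundaries, with flow
`Φ`, a cycle `z ∈ Z_n` is lexicographically minimal in its homology class if and only if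
`z` is `Φ`-invariant. -/
theorem stmt14 {𝕜 : Type} [Field 𝕜] {l : ℕ} (C : BasedChainComplex 𝕜 l)
    (V : Finset (Fin l × Fin l)) (hV : C.IsAlgGradient V)
    (n : ℕ) (hred : C.NReduced V n) (hgen : C.GeneratesBoundaries V n)
    (z : Fin l → 𝕜) (hz : C.IsCycle n z) :
    C.LexMinimal z ↔ C.flow V z = z := by
  have hflow := C.flow_eq_add (V := V) z hz.1
  constructor
  · intro hmin
    by_cases h0 : ∀ p ∈ V, z p.1 = 0
    · rw [hflow, C.Fmap_eq_zero z h0, mulVec_zero, add_zero]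
    · push Not at h0
      exact absurd (hflow ▸ C.chainLexLt_flow hV hred hz h0) (hmin _)
  · intro hfix
    refine C.lexMinimal_of_forall_eq_zero hV hred hgen hz fun p hp => ?_
    by_contra hzp
    exact (C.chainLexLt_flow hV hred hz ⟨p, hp, hzp⟩).2 (by rw [hfix])
end
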